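/- arXiv:2605.22666 — 7 statements merged into one kernel-verified Lean document; each statement's English description precedes it below -/
import Mathlib

section
/- For every η > 0 and k, t ∈ ℕ, set M = 2^{k⌈tη^{-2}⌉}. Then for every n ∈ ℕ, all probability measures μ₁,…,μ_k on [n], and all functions g₁,…,g_t : [n]^k → [0,1], there exists a partition [n] = T₁ ∪ ⋯ ∪ T_m with m ≤ M such that for every i ∈ {1,…,t} there is a step array W_i : [m]^k → [0,1] for which, for all product sets A₁ × ⋯ × A_k ⊆ [n]^k, |E[g_i(S)∏_{j=1}^k 1_{S_j ∈ A_j}] − Σ_{u ∈ [m]^k} W_i(u) ∏_{j=1}^k μ_j(A_j ∩ T_{u_j})| ≤ η, where S₁,…,S_k are independent random variables with S_j having law μ_j and S = (S₁,…,S_k). -/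
open Finset

namespace BoxRegAux

variable {k n m m' : ℕ} (μ : Fin k → Fin n → ℝ)

/-- product measure weight -/
def pm (s : Fin k → Fin n) : ℝ := ∏ j, μ j (s j)

/-- weighted inner product -/
def ip (f h : (Fin k → Fin n) → ℝ) : ℝ := ∑ s, pm μ s * (f s * h s)

variable (c : Fin n → Fin m)

/-- mass of a box -/
def bw (u : Fin k → Fin m) : ℝ := ∏ j, ∑ a, if c a = u j then μ j a else 0

/-- numerator: integral of g over a box -/
def bn (g : (Fin k → Fin n) → ℝ) (u : Fin k → Fin m) : ℝ :=
  ∑ s, if ∀ j, c (s j) = u j then pm μ s * g s else 0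

/-- conditional expectation value on a box -/
noncomputable def bW (g : (Fin k → Fin n) → ℝ) (u : Fin k → Fin m) : ℝ :=
  if bw μ c u = 0 then 0 else bn μ c g u / bw μ c u

noncomputable def en (g : (Fin k → Fin n) → ℝ) : ℝ :=
  ∑ u, bw μ c u * (bW μ c g u) ^ 2

noncomputable def pj (g : (Fin k → Fin n) → ℝ) (s : Fin k → Fin n) : ℝ :=
  bW μ c g (fun j => c (s j))

lemma prod_ite_all {ι : Type*} [Fintype ι] (Q : ι → Prop) [DecidablePred Q] (f : ι → ℝ) :
    (∏ j, if Q j then f j else 0) = if ∀ j, Q j then ∏ j, f j else 0 := by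
  by_cases h : ∀ j, Q j
  · simp [h]
  · push_neg at h
    obtain ⟨j, hj⟩ := h
    rw [if_neg (by push_neg; exact ⟨j, hj⟩)]
    exact Finset.prod_eq_zero (mem_univ j) (by simp [hj])

lemma sum_ite_prod (P : Fin k → Fin n → Prop) [∀ j a, Decidable (P j a)] :
    (∑ s : Fin k → Fin n, if ∀ j, P j (s j) then pm μ s else 0)
      = ∏ j, ∑ a, if P j a then μ j a else 0 := by
  rw [Finset.prod_univ_sum]
  rw [Fintype.piFinset_univ]
  refine Finset.sum_congr rfl fun s _ => ?_
  rw [prod_ite_all]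
  unfold pm
  split <;> rfl

lemma collapse (G : (Fin k → Fin n) → ℝ) (F : (Fin k → Fin m) → ℝ) :
    ∑ u, (∑ s, if ∀ j, c (s j) = u j then G s else 0) * F u
      = ∑ s, G s * F (fun j => c (s j)) := by
  simp_rw [Finset.sum_mul, ite_mul, zero_mul]
  rw [Finset.sum_comm]
  refine Finset.sum_congr rfl fun s _ => ?_
  have h : ∀ u : Fin k → Fin m, (∀ j, c (s j) = u j) ↔ ((fun j => c (s j)) = u) :=
    fun u => funext_iff.symm
  simp_rw [h]
  rw [Finset.sum_ite_eq]
  simp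


lemma bw_eq (u : Fin k → Fin m) :
    bw μ c u = ∑ s, if ∀ j, c (s j) = u j then pm μ s else 0 :=
  (sum_ite_prod μ (fun j a => c a = u j)).symm

lemma mass (hμ1 : ∀ j, ∑ i, μ j i = 1) : ∑ s, pm μ s = 1 := by
  have h := sum_ite_prod μ (fun _ _ => True)
  simpa [hμ1] using h

variable {μ}

lemma pm_nonneg (hμ0 : ∀ j i, 0 ≤ μ j i) (s : Fin k → Fin n) : 0 ≤ pm μ s :=
  Finset.prod_nonneg fun j _ => hμ0 j _

lemma bn_nonneg (hμ0 : ∀ j i, 0 ≤ μ j i) {g} (hg0 : ∀ s, 0 ≤ g s) (u : Fin k → Fin m) :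
    0 ≤ bn μ c g u := by
  refine Finset.sum_nonneg fun s _ => ?_
  split
  · exact mul_nonneg (pm_nonneg hμ0 s) (hg0 s)
  · exact le_refl 0

lemma bn_le_bw (hμ0 : ∀ j i, 0 ≤ μ j i) {g} (hg1 : ∀ s, g s ≤ 1) (u : Fin k → Fin m) :
    bn μ c g u ≤ bw μ c u := by
  rw [bw_eq]
  refine Finset.sum_le_sum fun s _ => ?_
  split
  · exact mul_le_of_le_one_right (pm_nonneg hμ0 s) (hg1 s)
  · exact le_refl 0

lemma bw_nonneg (hμ0 : ∀ j i, 0 ≤ μ j i) (u : Fin k → Fin m) : 0 ≤ bw μ c u := by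
  rw [bw_eq]
  refine Finset.sum_nonneg fun s _ => ?_
  split
  · exact pm_nonneg hμ0 s
  · exact le_refl 0

lemma bW_mem (hμ0 : ∀ j i, 0 ≤ μ j i) {g} (hg : ∀ s, g s ∈ Set.Icc (0:ℝ) 1)
    (u : Fin k → Fin m) : bW μ c g u ∈ Set.Icc (0:ℝ) 1 := by
  unfold bW
  split
  · exact ⟨le_refl _, zero_le_one⟩
  · rename_i h
    have hw : 0 < bw μ c u := lt_of_le_of_ne (bw_nonneg c hμ0 u) (Ne.symm h)
    constructor
    · exact div_nonneg (bn_nonneg c hμ0 (fun s => (hg s).1) u) hw.le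
    · rw [div_le_one hw]
      exact bn_le_bw c hμ0 (fun s => (hg s).2) u

lemma bn_eq_bW_mul (hμ0 : ∀ j i, 0 ≤ μ j i) {g} (hg : ∀ s, g s ∈ Set.Icc (0:ℝ) 1)
    (u : Fin k → Fin m) : bn μ c g u = bW μ c g u * bw μ c u := by
  unfold bW
  split
  · rename_i h
    have h1 : bn μ c g u ≤ 0 := h ▸ bn_le_bw c hμ0 (fun s => (hg s).2) u
    have h2 : 0 ≤ bn μ c g u := bn_nonneg c hμ0 (fun s => (hg s).1) u
    simp [le_antisymm h1 h2]
  · rename_i h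
    rw [div_mul_cancel₀ _ h]

lemma ip_g_step (g : (Fin k → Fin n) → ℝ) (F : (Fin k → Fin m) → ℝ) :
    ip μ g (fun s => F (fun j => c (s j))) = ∑ u, bn μ c g u * F u := by
  unfold ip bn
  rw [collapse c (fun s => pm μ s * g s) F]
  exact Finset.sum_congr rfl fun s _ => by ring

lemma ip_pj_step (hμ0 : ∀ j i, 0 ≤ μ j i) {g} (hg : ∀ s, g s ∈ Set.Icc (0:ℝ) 1)
    (F : (Fin k → Fin m) → ℝ) :
    ip μ (pj μ c g) (fun s => F (fun j => c (s j))) = ∑ u, bn μ c g u * F u := by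
  have h := collapse c (pm μ) (fun u => bW μ c g u * F u)
  simp only [← bw_eq] at h
  show (∑ s : Fin k → Fin n, pm μ s * (bW μ c g (fun j => c (s j)) * F (fun j => c (s j)))) = _
  rw [← h]
  refine Finset.sum_congr rfl fun u _ => ?_
  rw [bn_eq_bW_mul c hμ0 hg]
  ring

lemma en_eq (hμ0 : ∀ j i, 0 ≤ μ j i) {g} (hg : ∀ s, g s ∈ Set.Icc (0:ℝ) 1) :
    en μ c g = ip μ (pj μ c g) (pj μ c g) := by
  have h := ip_pj_step c hμ0 hg (bW μ c g)
  have h2 : (fun s => bW μ c g fun j => c (s j)) = pj μ c g := rfl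
  rw [h2] at h
  rw [h]
  refine Finset.sum_congr rfl fun u _ => ?_
  rw [bn_eq_bW_mul c hμ0 hg]
  ring

lemma en_nonneg (hμ0 : ∀ j i, 0 ≤ μ j i) (g : (Fin k → Fin n) → ℝ) : 0 ≤ en μ c g :=
  Finset.sum_nonneg fun u _ => mul_nonneg (bw_nonneg c hμ0 u) (sq_nonneg _)

lemma en_le_one (hμ0 : ∀ j i, 0 ≤ μ j i) (hμ1 : ∀ j, ∑ i, μ j i = 1)
    {g} (hg : ∀ s, g s ∈ Set.Icc (0:ℝ) 1) : en μ c g ≤ 1 := by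
  have h1 : en μ c g ≤ ∑ u, bw μ c u := by
    refine Finset.sum_le_sum fun u _ => ?_
    have := bW_mem c hμ0 hg u
    calc bw μ c u * (bW μ c g u) ^ 2 ≤ bw μ c u * 1 := by
          refine mul_le_mul_of_nonneg_left ?_ (bw_nonneg c hμ0 u)
          exact pow_le_one₀ this.1 this.2
      _ = bw μ c u := mul_one _
  have h2 : ∑ u, bw μ c u = 1 := by
    simp_rw [bw_eq]
    have h := collapse c (pm μ) (fun _ => (1:ℝ))
    simp only [mul_one] at h
    rw [h, mass μ hμ1]
  linarith

lemma ip_sub_left (f h e : (Fin k → Fin n) → ℝ) :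
    ip μ (fun s => f s - h s) e = ip μ f e - ip μ h e := by
  unfold ip
  rw [← Finset.sum_sub_distrib]
  exact Finset.sum_congr rfl fun s _ => by ring

lemma ip_expand (f h : (Fin k → Fin n) → ℝ) :
    ip μ (fun s => f s - h s) (fun s => f s - h s)
      = ip μ f f - 2 * ip μ f h + ip μ h h := by
  unfold ip
  rw [Finset.mul_sum, ← Finset.sum_sub_distrib, ← Finset.sum_add_distrib]
  exact Finset.sum_congr rfl fun s _ => by ring

lemma ip_self_nonneg (hμ0 : ∀ j i, 0 ≤ μ j i) (f : (Fin k → Fin n) → ℝ) :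
    0 ≤ ip μ f f :=
  Finset.sum_nonneg fun s _ => mul_nonneg (pm_nonneg hμ0 s) (mul_self_nonneg _)

lemma ip_sq_le (hμ0 : ∀ j i, 0 ≤ μ j i) (f h : (Fin k → Fin n) → ℝ) :
    (ip μ f h) ^ 2 ≤ ip μ f f * ip μ h h := by
  unfold ip
  have key : ∀ s : Fin k → Fin n,
      pm μ s * (f s * h s) = (Real.sqrt (pm μ s) * f s) * (Real.sqrt (pm μ s) * h s) := by
    intro s
    rw [mul_mul_mul_comm, Real.mul_self_sqrt (pm_nonneg hμ0 s)]
  have key2 : ∀ (f' : (Fin k → Fin n) → ℝ) (s),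
      pm μ s * (f' s * f' s) = (Real.sqrt (pm μ s) * f' s) ^ 2 := by
    intro f' s
    rw [mul_pow, Real.sq_sqrt (pm_nonneg hμ0 s)]
    ring
  simp_rw [key, key2]
  exact Finset.sum_mul_sq_le_sq_mul_sq _ _ _


section Refine

variable (c' : Fin n → Fin m') (r : Fin m' → Fin m)

lemma pj_meas (hr : ∀ a, r (c' a) = c a) (g : (Fin k → Fin n) → ℝ) :
    pj μ c g = fun s => (fun v : Fin k → Fin m' => bW μ c g (fun j => r (v j)))
      (fun j => c' (s j)) := by
  funext s
  show bW μ c g (fun j => c (s j)) = bW μ c g (fun j => r (c' (s j)))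
  congr 1
  funext j
  rw [hr]

lemma en_pyth (hμ0 : ∀ j i, 0 ≤ μ j i) {g} (hg : ∀ s, g s ∈ Set.Icc (0:ℝ) 1)
    (hr : ∀ a, r (c' a) = c a) :
    ip μ (fun s => pj μ c' g s - pj μ c g s) (fun s => pj μ c' g s - pj μ c g s)
      = en μ c' g - en μ c g := by
  rw [ip_expand]
  have h1 : ip μ (pj μ c' g) (pj μ c' g) = en μ c' g := (en_eq c' hμ0 hg).symm
  have h3 : ip μ (pj μ c g) (pj μ c g) = en μ c g := (en_eq c hμ0 hg).symm
  have h2 : ip μ (pj μ c' g) (pj μ c g) = en μ c g := by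
    rw [pj_meas c c' r hr g]
    rw [ip_pj_step c' hμ0 hg (fun v => bW μ c g (fun j => r (v j)))]
    rw [← ip_g_step c' g (fun v => bW μ c g (fun j => r (v j)))]
    rw [← pj_meas c c' r hr g]
    have h4 : ip μ g (pj μ c g) = ∑ u, bn μ c g u * bW μ c g u := by
      have h5 := ip_g_step (μ := μ) c g (bW μ c g)
      have h2' : (fun s => bW μ c g fun j => c (s j)) = pj μ c g := rfl
      rwa [h2'] at h5
    rw [h4]
    unfold en
    refine Finset.sum_congr rfl fun u _ => ?_
    rw [bn_eq_bW_mul c hμ0 hg]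
    ring
  rw [h1, h2, h3]
  ring

lemma en_mono (hμ0 : ∀ j i, 0 ≤ μ j i) {g} (hg : ∀ s, g s ∈ Set.Icc (0:ℝ) 1)
    (hr : ∀ a, r (c' a) = c a) : en μ c g ≤ en μ c' g := by
  have := en_pyth c c' r hμ0 hg hr
  have h0 := ip_self_nonneg hμ0 (fun s => pj μ c' g s - pj μ c g s)
  linarith

/-- Main energy increment inequality. -/
lemma en_inc (hμ0 : ∀ j i, 0 ≤ μ j i) (hμ1 : ∀ j, ∑ i, μ j i = 1)
    {g} (hg : ∀ s, g s ∈ Set.Icc (0:ℝ) 1)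
    (hr : ∀ a, r (c' a) = c a)
    (A : Fin k → Finset (Fin n)) (β : Fin m' → Fin k → Bool)
    (hβ : ∀ a j, β (c' a) j = true ↔ a ∈ A j) :
    en μ c g + (ip μ (fun s => g s - pj μ c g s)
        (fun s => if ∀ j, s j ∈ A j then (1:ℝ) else 0)) ^ 2 ≤ en μ c' g := by
  set χ : (Fin k → Fin n) → ℝ := fun s => if ∀ j, s j ∈ A j then (1:ℝ) else 0 with hχdef
  set d : (Fin k → Fin n) → ℝ := fun s => pj μ c' g s - pj μ c g s with hd
  -- χ is c'-measurable
  have hχ : χ = fun s => (fun v : Fin k → Fin m' =>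
      if ∀ j, β (v j) j = true then (1:ℝ) else 0) (fun j => c' (s j)) := by
    funext s
    show (if ∀ j, s j ∈ A j then (1:ℝ) else 0)
      = (if ∀ j, β (c' (s j)) j = true then (1:ℝ) else 0)
    refine if_congr ?_ rfl rfl
    constructor
    · intro h j; exact (hβ (s j) j).mpr (h j)
    · intro h j; exact (hβ (s j) j).mp (h j)
  -- D = ip d χ
  have hD : ip μ (fun s => g s - pj μ c g s) χ = ip μ d χ := by
    rw [ip_sub_left, hd, ip_sub_left]
    have heq : ip μ g χ = ip μ (pj μ c' g) χ := by
      rw [hχ]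
      rw [ip_g_step (μ := μ) c' g
        (fun v : Fin k → Fin m' => if ∀ j, β (v j) j = true then (1:ℝ) else 0)]
      rw [ip_pj_step c' hμ0 hg
        (fun v : Fin k → Fin m' => if ∀ j, β (v j) j = true then (1:ℝ) else 0)]
    rw [heq]
  -- Cauchy-Schwarz
  have hCS : (ip μ d χ) ^ 2 ≤ ip μ d d * ip μ χ χ := ip_sq_le hμ0 d χ
  have hχχ : ip μ χ χ ≤ 1 := by
    have h1 : ip μ χ χ ≤ ∑ s, pm μ s := by
      refine Finset.sum_le_sum fun s _ => ?_
      have hb : χ s * χ s ≤ 1 := by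
        show (if ∀ j, s j ∈ A j then (1:ℝ) else 0)
            * (if ∀ j, s j ∈ A j then (1:ℝ) else 0) ≤ 1
        split <;> norm_num
      calc pm μ s * (χ s * χ s) ≤ pm μ s * 1 :=
            mul_le_mul_of_nonneg_left hb (pm_nonneg hμ0 s)
        _ = pm μ s := mul_one _
    rw [mass μ hμ1] at h1
    exact h1
  have hdd : 0 ≤ ip μ d d := ip_self_nonneg hμ0 d
  have hpyth : ip μ d d = en μ c' g - en μ c g := en_pyth c c' r hμ0 hg hr
  have : (ip μ d χ) ^ 2 ≤ ip μ d d := by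
    calc (ip μ d χ) ^ 2 ≤ ip μ d d * ip μ χ χ := hCS
      _ ≤ ip μ d d * 1 := mul_le_mul_of_nonneg_left hχχ hdd
      _ = ip μ d d := mul_one _
  rw [hD]
  linarith

end Refine


variable (μ)

/-- true integral over the product set -/
def Sint (g : (Fin k → Fin n) → ℝ) (A : Fin k → Finset (Fin n)) : ℝ :=
  ∑ s, if ∀ j, s j ∈ A j then pm μ s * g s else 0

/-- step-array approximation -/
noncomputable def Tapprox (c : Fin n → Fin m) (g : (Fin k → Fin n) → ℝ)
    (A : Fin k → Finset (Fin n)) : ℝ :=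
  ∑ u, bW μ c g u * ∏ j, ∑ a ∈ (A j).filter (fun a => c a = u j), μ j a

lemma S_eq (g : (Fin k → Fin n) → ℝ) (A : Fin k → Finset (Fin n)) :
    Sint μ g A = ip μ g (fun s => if ∀ j, s j ∈ A j then (1:ℝ) else 0) := by
  unfold Sint ip
  refine Finset.sum_congr rfl fun s _ => ?_
  by_cases h : ∀ j, s j ∈ A j <;> simp [h, mul_comm]

lemma T_eq (hμ0 : ∀ j i, 0 ≤ μ j i) {g} (hg : ∀ s, g s ∈ Set.Icc (0:ℝ) 1)
    (c : Fin n → Fin m) (A : Fin k → Finset (Fin n)) :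
    Tapprox μ c g A
      = ip μ (pj μ c g) (fun s => if ∀ j, s j ∈ A j then (1:ℝ) else 0) := by
  have step1 : ∀ (u : Fin k → Fin m) (j : Fin k),
      (∑ a ∈ (A j).filter (fun a => c a = u j), μ j a)
        = ∑ a : Fin n, if a ∈ A j ∧ c a = u j then μ j a else 0 := by
    intro u j
    rw [Finset.sum_filter]
    calc (∑ a ∈ A j, if c a = u j then μ j a else 0)
        = ∑ a ∈ univ ∩ A j, (if c a = u j then μ j a else 0) := by rw [Finset.univ_inter]
      _ = ∑ a : Fin n, if a ∈ A j then (if c a = u j then μ j a else 0) else 0 :=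
          (Finset.sum_ite_mem _ _ _).symm
      _ = ∑ a : Fin n, if a ∈ A j ∧ c a = u j then μ j a else 0 := by
          refine Finset.sum_congr rfl fun a _ => (ite_and _ _ _ _).symm
  calc Tapprox μ c g A
      = ∑ u, (∑ s, if ∀ j, c (s j) = u j
          then (if ∀ j, s j ∈ A j then pm μ s else 0) else 0) * bW μ c g u := by
        unfold Tapprox
        refine Finset.sum_congr rfl fun u _ => ?_
        rw [mul_comm]
        congr 1
        calc (∏ j, ∑ a ∈ (A j).filter (fun a => c a = u j), μ j a)
            = ∏ j, ∑ a : Fin n, if a ∈ A j ∧ c a = u j then μ j a else 0 :=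
              Finset.prod_congr rfl fun j _ => step1 u j
          _ = ∑ s, if ∀ j, s j ∈ A j ∧ c (s j) = u j then pm μ s else 0 :=
              (sum_ite_prod μ _).symm
          _ = ∑ s, if ∀ j, c (s j) = u j
                then (if ∀ j, s j ∈ A j then pm μ s else 0) else 0 := by
              refine Finset.sum_congr rfl fun s _ => ?_
              have hc : (∀ j, s j ∈ A j ∧ c (s j) = u j)
                  ↔ ((∀ j, c (s j) = u j) ∧ ∀ j, s j ∈ A j) :=
                ⟨fun h => ⟨fun j => (h j).2, fun j => (h j).1⟩,
                 fun h j => ⟨h.2 j, h.1 j⟩⟩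
              rw [if_congr hc rfl rfl, ite_and]
    _ = ∑ s, (if ∀ j, s j ∈ A j then pm μ s else 0) * bW μ c g (fun j => c (s j)) :=
        collapse c _ _
    _ = ip μ (pj μ c g) (fun s => if ∀ j, s j ∈ A j then (1:ℝ) else 0) := by
        unfold ip pj
        refine Finset.sum_congr rfl fun s _ => ?_
        by_cases h : ∀ j, s j ∈ A j <;> simp [h, mul_comm]

/-- One refinement step: a refined coloring improving energy by the squared defect,
uniformly in `g`. -/
lemma refine_exists (hμ0 : ∀ j i, 0 ≤ μ j i) (hμ1 : ∀ j, ∑ i, μ j i = 1)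
    (c : Fin n → Fin m) (A : Fin k → Finset (Fin n)) :
    ∃ c' : Fin n → Fin (m * 2 ^ k),
      ∀ g : (Fin k → Fin n) → ℝ, (∀ s, g s ∈ Set.Icc (0:ℝ) 1) →
        en μ c g + (Sint μ g A - Tapprox μ c g A) ^ 2 ≤ en μ c' g := by
  classical
  have hcard : Fintype.card (Fin m × (Fin k → Bool)) = m * 2 ^ k := by
    simp [Fintype.card_fun]
  let EQ : (Fin m × (Fin k → Bool)) ≃ Fin (m * 2 ^ k) := Fintype.equivFinOfCardEq hcard
  refine ⟨fun a => EQ (c a, fun j => decide (a ∈ A j)), ?_⟩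
  intro g hg
  set c' : Fin n → Fin (m * 2 ^ k) := fun a => EQ (c a, fun j => decide (a ∈ A j)) with hc'
  have hr : ∀ a, (EQ.symm (c' a)).1 = c a := by
    intro a; rw [hc']; simp
  have hβ : ∀ a j, (EQ.symm (c' a)).2 j = true ↔ a ∈ A j := by
    intro a j; rw [hc']; simp
  have hinc := en_inc c c' (fun v => (EQ.symm v).1) hμ0 hμ1 hg hr A
    (fun v j => (EQ.symm v).2 j) hβ
  have hST : Sint μ g A - Tapprox μ c g A
      = ip μ (fun s => g s - pj μ c g s)
          (fun s => if ∀ j, s j ∈ A j then (1:ℝ) else 0) := by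
    rw [S_eq μ g A, T_eq μ hμ0 hg c A, ip_sub_left]
  rw [hST]
  exact hinc

end BoxRegAux

/-- Box regularity lemma.
For every `η > 0` and `k, t ∈ ℕ`, with `M = 2^(k⌈t/η²⌉)`, for all discrete probability
measures `μ₁,…,μ_k` on `[n]` and all `g₁,…,g_t : [n]^k → [0,1]` there is a partition of
`[n]` into `m ≤ M` parts (encoded as a coloring `c : Fin n → Fin m`, the parts being the
fibers `T_u = c⁻¹(u)`) such that for every `i` there is a step array `W_i : [m]^k → [0,1]`
with, for all product sets `A₁ × ⋯ × A_k`,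
`|E[g_i(S) ∏_j 1_{S_j ∈ A_j}] - ∑_u W_i(u) ∏_j μ_j(A_j ∩ T_{u_j})| ≤ η`. -/
theorem box_regularity (η : ℝ) (hη : 0 < η) (k t n : ℕ)
    (μ : Fin k → Fin n → ℝ)
    (hμ0 : ∀ j i, 0 ≤ μ j i) (hμ1 : ∀ j, ∑ i, μ j i = 1)
    (g : Fin t → (Fin k → Fin n) → ℝ)
    (hg : ∀ i s, g i s ∈ Set.Icc (0 : ℝ) 1) :
    ∃ m : ℕ, m ≤ 2 ^ (k * ⌈(t : ℝ) / η ^ 2⌉₊) ∧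
      ∃ c : Fin n → Fin m,
        ∀ i : Fin t, ∃ W : (Fin k → Fin m) → ℝ,
          (∀ u, W u ∈ Set.Icc (0 : ℝ) 1) ∧
          ∀ A : Fin k → Finset (Fin n),
            |(∑ s : Fin k → Fin n,
                (if ∀ j, s j ∈ A j then (∏ j, μ j (s j)) * g i s else 0))
              - ∑ u : Fin k → Fin m,
                  W u * ∏ j, ∑ a ∈ (A j).filter (fun a => c a = u j), μ j a| ≤ η := by
  classical
  open BoxRegAux in
  -- the invariant
  have key : ∀ N : ℕ, ∃ m : ℕ, m ≤ 2 ^ (k * N) ∧ ∃ c : Fin n → Fin m,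
      (∀ (i : Fin t) (A : Fin k → Finset (Fin n)),
          |Sint μ (g i) A - Tapprox μ c (g i) A| ≤ η)
        ∨ (N = 0 ∨ (N : ℝ) * η ^ 2 < ∑ i, en μ c (g i)) := by
    intro N
    induction N with
    | zero => exact ⟨1, by norm_num, fun _ => 0, Or.inr (Or.inl rfl)⟩
    | succ N ih =>
      obtain ⟨m, hm, c, hc⟩ := ih
      have hmle : m ≤ 2 ^ (k * (N + 1)) :=
        le_trans hm (Nat.pow_le_pow_right (by norm_num) (by nlinarith))
      by_cases hGood : ∀ (i : Fin t) (A : Fin k → Finset (Fin n)),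
          |Sint μ (g i) A - Tapprox μ c (g i) A| ≤ η
      · exact ⟨m, hmle, c, Or.inl hGood⟩
      · push_neg at hGood
        obtain ⟨i, A, hbad⟩ := hGood
        obtain ⟨c', hc'⟩ := refine_exists μ hμ0 hμ1 c A
        refine ⟨m * 2 ^ k, ?_, c', Or.inr (Or.inr ?_)⟩
        · calc m * 2 ^ k ≤ 2 ^ (k * N) * 2 ^ k := Nat.mul_le_mul_right _ hm
            _ = 2 ^ (k * (N + 1)) := by rw [← pow_add]; ring_nf
        · -- energy increment
          have hEn0 : (N : ℝ) * η ^ 2 ≤ ∑ i', en μ c (g i') := by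
            rcases hc with h | h | h
            · exact absurd (h i A) (not_le.mpr hbad)
            · subst h
              simpa using Finset.sum_nonneg fun i' _ => en_nonneg c hμ0 (g i')
            · exact h.le
          have hsum : ∑ i', (en μ c (g i')
                + (Sint μ (g i') A - Tapprox μ c (g i') A) ^ 2)
              ≤ ∑ i', en μ c' (g i') :=
            Finset.sum_le_sum fun i' _ => hc' (g i') (hg i')
          rw [Finset.sum_add_distrib] at hsum
          have hsingle : (Sint μ (g i) A - Tapprox μ c (g i) A) ^ 2
              ≤ ∑ i', (Sint μ (g i') A - Tapprox μ c (g i') A) ^ 2 :=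
            Finset.single_le_sum (f := fun i' => (Sint μ (g i') A - Tapprox μ c (g i') A) ^ 2)
              (fun i' _ => sq_nonneg _) (Finset.mem_univ i)
          have hsq : η ^ 2 < (Sint μ (g i) A - Tapprox μ c (g i) A) ^ 2 := by
            have h1 : η * η < |Sint μ (g i) A - Tapprox μ c (g i) A|
                * |Sint μ (g i) A - Tapprox μ c (g i) A| :=
              mul_self_lt_mul_self hη.le hbad
            have h2 := sq_abs (Sint μ (g i) A - Tapprox μ c (g i) A)
            nlinarith
          push_cast
          nlinarith
  obtain ⟨m, hm, c, hc⟩ := key ⌈(t : ℝ) / η ^ 2⌉₊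
  refine ⟨m, hm, c, ?_⟩
  have hfinal : ∀ (i : Fin t) (A : Fin k → Finset (Fin n)),
      |Sint μ (g i) A - Tapprox μ c (g i) A| ≤ η := by
    rcases hc with h | h | h
    · exact h
    · -- ceiling is zero : t = 0
      intro i A
      have ht0 : (t : ℝ) / η ^ 2 ≤ 0 := by
        by_contra hpos
        push_neg at hpos
        have := Nat.ceil_pos.mpr hpos
        omega
      have ht : (t : ℝ) ≤ 0 := by
        by_contra hpos
        push_neg at hpos
        have : 0 < (t : ℝ) / η ^ 2 := div_pos hpos (by positivity)
        linarith
      have : t = 0 := by exact_mod_cast le_antisymm ht (by positivity)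
      exact absurd i.isLt (by omega)
    · -- contradiction with energy bound
      exfalso
      have hEnle : ∑ i, en μ c (g i) ≤ (t : ℝ) := by
        calc ∑ i, en μ c (g i) ≤ ∑ _i : Fin t, (1 : ℝ) :=
              Finset.sum_le_sum fun i _ => en_le_one c hμ0 hμ1 (hg i)
          _ = t := by simp
      have hceil : (t : ℝ) / η ^ 2 ≤ (⌈(t : ℝ) / η ^ 2⌉₊ : ℝ) := Nat.le_ceil _
      have hη2 : (0 : ℝ) < η ^ 2 := by positivity
      have ht' : (t : ℝ) ≤ (⌈(t : ℝ) / η ^ 2⌉₊ : ℝ) * η ^ 2 := by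
        have h := mul_le_mul_of_nonneg_right hceil hη2.le
        rwa [div_mul_cancel₀ _ hη2.ne'] at h
      linarith
  intro i
  refine ⟨bW μ c (g i), fun u => bW_mem c hμ0 (hg i) u, fun A => ?_⟩
  exact hfinal i A
end

section
/- For every k ∈ ℕ and ε ∈ (0,1) there exists K = K(k,ε) ∈ ℕ such that every (k,ε)-holographic fuzzy Boolean function f : {0,1}^n → [0,1] (for any n ∈ ℕ) has the (K,3ε)-polynomial property. -/
/-- `f : {0,1}^n → [0,1]` is `(k,ε)`-holographic: there are discrete probability measures
`μ₁,…,μ_k` on `[n]` and test functions `f_s : {0,1}^k → [0,1]` such that for every `x`,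
`P(|f(x) - f_S(x_{S₁},…,x_{S_k})| ≤ ε) ≥ 1 - ε` where the `S_j` are independent with
`S_j ∼ μ_j`. -/
def Holographic (n k : ℕ) (ε : ℝ) (f : (Fin n → Bool) → ℝ) : Prop :=
  ∃ (μ : Fin k → Fin n → ℝ) (ft : (Fin k → Fin n) → (Fin k → Bool) → ℝ),
    (∀ j i, 0 ≤ μ j i) ∧ (∀ j, ∑ i, μ j i = 1) ∧
    (∀ s a, ft s a ∈ Set.Icc (0 : ℝ) 1) ∧
    ∀ x : Fin n → Bool,
      1 - ε ≤ ∑ s : Fin k → Fin n,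
        (if |f x - ft s (fun j => x (s j))| ≤ ε then ∏ j, μ j (s j) else 0)

/-- `f` has the `(K,ε)`-polynomial property: there are `1 ≤ m ≤ K` linear forms
`L_i(x) = ∑_j w_{ij} x_j` with `∑_j |w_{ij}| ≤ K` and a polynomial `p` in `m` variables
of degree at most `K` and coefficient `ℓ¹`-norm at most `K` such that
`|f(x) - p(L₁(x),…,L_m(x))| ≤ ε` for all `x ∈ {0,1}^n`. -/
def PolyProperty (n K : ℕ) (ε : ℝ) (f : (Fin n → Bool) → ℝ) : Prop :=
  ∃ m : ℕ, 1 ≤ m ∧ m ≤ K ∧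
    ∃ w : Fin m → Fin n → ℝ,
      (∀ i, ∑ j, |w i j| ≤ (K : ℝ)) ∧
      ∃ p : MvPolynomial (Fin m) ℝ,
        p.totalDegree ≤ K ∧
        (∑ d ∈ p.support, |MvPolynomial.coeff d p|) ≤ (K : ℝ) ∧
        ∀ x : Fin n → Bool,
          |f x - MvPolynomial.eval
              (fun i => ∑ j, w i j * (if x j then (1 : ℝ) else 0)) p| ≤ ε

noncomputable def CoefL1 {σ : Type*} (p : MvPolynomial σ ℝ) : ℝ :=
  ∑ d ∈ p.support, |MvPolynomial.coeff d p|

lemma CoefL1_nonneg {σ : Type*} (p : MvPolynomial σ ℝ) : 0 ≤ CoefL1 p :=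
  Finset.sum_nonneg fun _ _ => abs_nonneg _

lemma CoefL1_eq_sum {σ : Type*} (p : MvPolynomial σ ℝ) {S : Finset (σ →₀ ℕ)}
    (h : p.support ⊆ S) : CoefL1 p = ∑ d ∈ S, |MvPolynomial.coeff d p| :=
  Finset.sum_subset h (fun d _ hd => by
    simp [MvPolynomial.notMem_support_iff.mp hd])

lemma CoefL1_add_le {σ : Type*} (p q : MvPolynomial σ ℝ) :
    CoefL1 (p + q) ≤ CoefL1 p + CoefL1 q := by
  classical
  rw [CoefL1_eq_sum (p + q) (MvPolynomial.support_add),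
    CoefL1_eq_sum p (Finset.subset_union_left),
    CoefL1_eq_sum q (Finset.subset_union_right), ← Finset.sum_add_distrib]
  exact Finset.sum_le_sum fun d _ => by
    simpa [MvPolynomial.coeff_add] using abs_add_le (MvPolynomial.coeff d p) (MvPolynomial.coeff d q)

lemma CoefL1_sum_le {σ α : Type*} (s : Finset α) (f : α → MvPolynomial σ ℝ) :
    CoefL1 (∑ i ∈ s, f i) ≤ ∑ i ∈ s, CoefL1 (f i) := by
  classical
  induction s using Finset.cons_induction with
  | empty => simp [CoefL1]
  | cons a s ha ih =>
    rw [Finset.sum_cons, Finset.sum_cons]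
    exact (CoefL1_add_le _ _).trans (by linarith)

lemma CoefL1_monomial {σ : Type*} (d : σ →₀ ℕ) (c : ℝ) :
    CoefL1 (MvPolynomial.monomial d c) = |c| := by
  classical
  by_cases hc : c = 0
  · simp [CoefL1, hc]
  · simp [CoefL1, MvPolynomial.support_monomial, hc, MvPolynomial.coeff_monomial]

lemma CoefL1_C {σ : Type*} (c : ℝ) : CoefL1 (MvPolynomial.C c : MvPolynomial σ ℝ) = |c| := by
  rw [MvPolynomial.C_apply, CoefL1_monomial]

lemma CoefL1_X {σ : Type*} (i : σ) : CoefL1 (MvPolynomial.X i : MvPolynomial σ ℝ) = 1 := by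
  have : (MvPolynomial.X i : MvPolynomial σ ℝ) = MvPolynomial.monomial (Finsupp.single i 1) 1 := rfl
  rw [this, CoefL1_monomial]; norm_num

lemma CoefL1_neg {σ : Type*} (p : MvPolynomial σ ℝ) : CoefL1 (-p) = CoefL1 p := by
  simp [CoefL1, MvPolynomial.support_neg]

lemma CoefL1_sub_le {σ : Type*} (p q : MvPolynomial σ ℝ) :
    CoefL1 (p - q) ≤ CoefL1 p + CoefL1 q := by
  rw [sub_eq_add_neg]
  exact (CoefL1_add_le _ _).trans (by rw [CoefL1_neg])

lemma CoefL1_mul_le {σ : Type*} (p q : MvPolynomial σ ℝ) :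
    CoefL1 (p * q) ≤ CoefL1 p * CoefL1 q := by
  classical
  have h1 : CoefL1 (p * q) ≤ ∑ d ∈ (p * q).support,
      ∑ z ∈ Finset.HasAntidiagonal.antidiagonal d, |MvPolynomial.coeff z.1 p| * |MvPolynomial.coeff z.2 q| := by
    refine Finset.sum_le_sum fun d _ => ?_
    rw [MvPolynomial.coeff_mul]
    exact (Finset.abs_sum_le_sum_abs _ _).trans
      (le_of_eq (Finset.sum_congr rfl fun z _ => abs_mul _ _))
  have h2 : ∑ d ∈ (p * q).support,
      ∑ z ∈ Finset.HasAntidiagonal.antidiagonal d, |MvPolynomial.coeff z.1 p| * |MvPolynomial.coeff z.2 q|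
      ≤ ∑ z ∈ p.support ×ˢ q.support, |MvPolynomial.coeff z.1 p| * |MvPolynomial.coeff z.2 q| := by
    have hstep : ∀ d ∈ (p * q).support,
        ∑ z ∈ Finset.HasAntidiagonal.antidiagonal d, |MvPolynomial.coeff z.1 p| * |MvPolynomial.coeff z.2 q|
        = ∑ z ∈ Finset.HasAntidiagonal.antidiagonal d ∩ p.support ×ˢ q.support,
            |MvPolynomial.coeff z.1 p| * |MvPolynomial.coeff z.2 q| := by
      intro d _
      refine (Finset.sum_subset Finset.inter_subset_left ?_).symm
      intro z hz hz2
      have : z.1 ∉ p.support ∨ z.2 ∉ q.support := by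
        by_contra h
        push_neg at h
        exact hz2 (Finset.mem_inter.mpr ⟨hz, Finset.mem_product.mpr ⟨h.1, h.2⟩⟩)
      rcases this with h | h
      · rw [MvPolynomial.notMem_support_iff.mp h]; simp
      · rw [MvPolynomial.notMem_support_iff.mp h]; simp
    rw [Finset.sum_congr rfl hstep]
    have hdisj : (↑(p * q).support : Set (σ →₀ ℕ)).PairwiseDisjoint
        (fun d => Finset.HasAntidiagonal.antidiagonal d ∩ p.support ×ˢ q.support) := by
      intro a _ b _ hab
      simp only [Function.onFun, Finset.disjoint_left]
      intro z hza hzb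
      have ha := Finset.HasAntidiagonal.mem_antidiagonal.mp (Finset.mem_inter.mp hza).1
      have hb := Finset.HasAntidiagonal.mem_antidiagonal.mp (Finset.mem_inter.mp hzb).1
      exact hab (ha ▸ hb ▸ rfl)
    rw [← Finset.sum_biUnion hdisj]
    refine Finset.sum_le_sum_of_subset_of_nonneg ?_ (fun _ _ _ => mul_nonneg (abs_nonneg _) (abs_nonneg _))
    exact Finset.biUnion_subset.mpr fun d _ => Finset.inter_subset_right
  calc CoefL1 (p * q) ≤ _ := h1
    _ ≤ _ := h2
    _ = CoefL1 p * CoefL1 q := by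
        rw [Finset.sum_product, CoefL1, CoefL1, Finset.sum_mul]
        exact Finset.sum_congr rfl fun d _ => by rw [Finset.mul_sum]

lemma CoefL1_prod_le {σ α : Type*} (s : Finset α) (f : α → MvPolynomial σ ℝ) :
    CoefL1 (∏ i ∈ s, f i) ≤ ∏ i ∈ s, CoefL1 (f i) := by
  classical
  induction s using Finset.cons_induction with
  | empty => simpa using (CoefL1_C (σ := σ) 1).le
  | cons a s ha ih =>
    rw [Finset.prod_cons, Finset.prod_cons]
    exact (CoefL1_mul_le _ _).trans
      (mul_le_mul_of_nonneg_left ih (CoefL1_nonneg _))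


lemma fk_lemma {ι β : Type*} [Fintype ι] [Nonempty β]
    (ν : ι → ℝ) (hν0 : ∀ s, 0 ≤ ν s) (hν1 : ∑ s, ν s ≤ 1)
    (T : ι → ℝ) (hT : ∀ s, T s ∈ Set.Icc (0:ℝ) 1)
    (P : β → ι → ℝ) (hP : ∀ b s, P b s ∈ Set.Icc (0:ℝ) 1)
    (δ : ℝ) (hδ : 0 < δ) (N : ℕ) (hN : 1 ≤ (N : ℝ) * δ ^ 2) :
    ∃ (σ : Fin N → ℝ) (c : Fin N → β), (∀ r, |σ r| ≤ δ) ∧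
      ∀ b : β, |∑ s, ν s * (T s - ∑ r, σ r * P (c r) s) * P b s| ≤ δ := by
  classical
  set A : (ℕ → ℝ) → (ℕ → β) → ℕ → ι → ℝ :=
    fun σ c t s => ∑ r ∈ Finset.range t, σ r * P (c r) s with hA
  have key : ∀ M : ℕ, ∀ (σ : ℕ → ℝ) (c : ℕ → β) (t : ℕ), (∀ r, |σ r| ≤ δ) →
      (∑ s, ν s * (T s - A σ c t s) ^ 2) ≤ M * δ ^ 2 →
      ∃ (σ' : ℕ → ℝ) (c' : ℕ → β) (t' : ℕ), (∀ r, |σ' r| ≤ δ) ∧ t' ≤ t + M ∧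
        ∀ b, |∑ s, ν s * (T s - A σ' c' t' s) * P b s| ≤ δ := by
    intro M
    induction M with
    | zero =>
      intro σ c t hσ hE
      refine ⟨σ, c, t, hσ, by omega, ?_⟩
      intro b
      have hE0 : ∀ s ∈ (Finset.univ : Finset ι), ν s * (T s - A σ c t s) ^ 2 = 0 := by
        rw [← Finset.sum_eq_zero_iff_of_nonneg
          (fun s _ => mul_nonneg (hν0 s) (sq_nonneg _))]
        have : (0:ℝ) ≤ ∑ s, ν s * (T s - A σ c t s) ^ 2 :=
          Finset.sum_nonneg fun s _ => mul_nonneg (hν0 s) (sq_nonneg _)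
        push_cast at hE
        linarith
      have hz : ∀ s ∈ (Finset.univ : Finset ι), ν s * (T s - A σ c t s) * P b s = 0 := by
        intro s hs
        rcases mul_eq_zero.mp (hE0 s hs) with h | h
        · rw [h]; ring
        · rw [pow_eq_zero_iff (by norm_num)] at h
          rw [h]; ring
      rw [Finset.sum_eq_zero hz]
      simpa using hδ.le
    | succ M ih =>
      intro σ c t hσ hE
      by_cases hgood : ∀ b, |∑ s, ν s * (T s - A σ c t s) * P b s| ≤ δ
      · exact ⟨σ, c, t, hσ, by omega, hgood⟩
      push_neg at hgood
      obtain ⟨b₀, hb₀⟩ := hgood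
      set ip := ∑ s, ν s * (T s - A σ c t s) * P b₀ s with hip
      set θ : ℝ := if 0 ≤ ip then δ else -δ with hθ
      have hθabs : |θ| = δ := by
        rw [hθ]; split <;> simp [abs_of_nonneg hδ.le, abs_of_nonpos (neg_nonpos.mpr hδ.le)]
      have hAnew : ∀ s, A (Function.update σ t θ) (Function.update c t b₀) (t+1) s
          = A σ c t s + θ * P b₀ s := by
        intro s
        rw [hA]
        simp only [Finset.sum_range_succ, Function.update_self]
        congr 1
        refine Finset.sum_congr rfl fun r hr => ?_
        have hrt : r ≠ t := by have := Finset.mem_range.mp hr; omega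
        rw [Function.update_of_ne hrt, Function.update_of_ne hrt]
      have hEnew : (∑ s, ν s * (T s - A (Function.update σ t θ) (Function.update c t b₀) (t+1) s) ^ 2)
          ≤ M * δ ^ 2 := by
        have hexp : ∀ s, ν s * (T s - A (Function.update σ t θ) (Function.update c t b₀) (t+1) s) ^ 2
            = ν s * (T s - A σ c t s) ^ 2
              - 2 * θ * (ν s * (T s - A σ c t s) * P b₀ s)
              + θ ^ 2 * (ν s * P b₀ s ^ 2) := by
          intro s; rw [hAnew s]; ring
        rw [Finset.sum_congr rfl (fun s _ => hexp s), Finset.sum_add_distrib,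
          Finset.sum_sub_distrib, ← Finset.mul_sum, ← Finset.mul_sum, ← hip]
        have hQ : ∑ s, ν s * P b₀ s ^ 2 ≤ 1 := by
          refine le_trans (Finset.sum_le_sum fun s _ => ?_) hν1
          have h3 : P b₀ s ^ 2 ≤ 1 := by nlinarith [(hP b₀ s).1, (hP b₀ s).2]
          exact mul_le_of_le_one_right (hν0 s) h3
        have hsign : 2 * θ * ip = 2 * δ * |ip| := by
          rw [hθ]; rcases le_or_gt 0 ip with h | h
          · rw [if_pos h, abs_of_nonneg h]
          · rw [if_neg (not_le.mpr h), abs_of_neg h]; ring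
        have hθ2 : θ ^ 2 = δ ^ 2 := by rw [hθ]; split <;> ring
        rw [hsign, hθ2]
        have h1 : δ ^ 2 * (∑ s, ν s * P b₀ s ^ 2) ≤ δ ^ 2 := by
          nlinarith [sq_nonneg δ]
        have h2 : 2 * δ * δ ≤ 2 * δ * |ip| := by nlinarith
        push_cast
        push_cast at hE
        nlinarith
      obtain ⟨σ', c', t', h1, h2, h3⟩ := ih (Function.update σ t θ) (Function.update c t b₀)
        (t + 1) (fun r => by
          rcases eq_or_ne r t with h | h
          · rw [h, Function.update_self]; exact hθabs.le
          · rw [Function.update_of_ne h]; exact hσ r) hEnew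
      exact ⟨σ', c', t', h1, by omega, h3⟩
  have hE0 : (∑ s, ν s * (T s - A 0 (fun _ => Classical.arbitrary β) 0 s) ^ 2) ≤ N * δ ^ 2 := by
    have : ∀ s, A 0 (fun _ => Classical.arbitrary β) 0 s = 0 := by
      intro s; rw [hA]; simp
    rw [Finset.sum_congr rfl (fun s _ => by rw [this s, sub_zero])]
    refine le_trans (le_trans (Finset.sum_le_sum fun s _ => ?_) hν1) hN
    have h3 : T s ^ 2 ≤ 1 := by nlinarith [(hT s).1, (hT s).2]
    exact mul_le_of_le_one_right (hν0 s) h3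
  obtain ⟨σ', c', t', hσ', ht', hfin⟩ := key N 0 (fun _ => Classical.arbitrary β) 0
    (fun r => by simpa using hδ.le) hE0
  have htN : t' ≤ N := by omega
  refine ⟨fun r => if (r : ℕ) < t' then σ' r else 0, fun r => c' r, ?_, ?_⟩
  · intro r
    dsimp only
    split
    · exact hσ' r
    · simpa using hδ.le
  · intro b
    have hsum : ∀ s, (∑ r : Fin N, (if (r : ℕ) < t' then σ' (r : ℕ) else 0) * P (c' (r : ℕ)) s)
        = A σ' c' t' s := by
      intro s
      rw [hA]
      rw [Fin.sum_univ_eq_sum_range (fun r => (if r < t' then σ' r else 0) * P (c' r) s) N]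
      rw [← Finset.sum_subset (Finset.range_subset_range.mpr htN)
        (fun r _ hr => by
          have : ¬ r < t' := fun h => hr (Finset.mem_range.mpr h)
          rw [if_neg this, zero_mul])]
      exact Finset.sum_congr rfl fun r hr => by rw [if_pos (Finset.mem_range.mp hr)]
    have := hfin b
    rw [Finset.sum_congr rfl (fun s _ => by rw [hsum s])]
    exact this

lemma sum_prod_eq {k n : ℕ} (h : Fin k → Fin n → ℝ) :
    ∑ s : Fin k → Fin n, ∏ j, h j (s j) = ∏ j, ∑ i, h j i := by
  classical
  rw [Finset.prod_univ_sum, Fintype.piFinset_univ]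

set_option maxHeartbeats 1000000 in
open Finset in
/-- Holography implies polynomial structure.
For every `k ∈ ℕ` and `ε ∈ (0,1)` there exists `K = K(k,ε) ∈ ℕ` such that every
`(k,ε)`-holographic fuzzy Boolean function (in any dimension `n`) has the
`(K,3ε)`-polynomial property. -/
theorem holography_implies_polynomial (k : ℕ) (ε : ℝ) (hε0 : 0 < ε) (hε1 : ε < 1) :
    ∃ K : ℕ, ∀ n : ℕ, ∀ f : (Fin n → Bool) → ℝ,
      (∀ x, f x ∈ Set.Icc (0 : ℝ) 1) →
      Holographic n k ε f → PolyProperty n K (3 * ε) f := by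
  classical
  set δ : ℝ := ε / 2 ^ k with hδdef
  have h2k : (0:ℝ) < 2 ^ k := by positivity
  have hδ : 0 < δ := div_pos hε0 h2k
  set N : ℕ := ⌈(δ ^ 2)⁻¹⌉₊ with hNdef
  have hN : 1 ≤ (N : ℝ) * δ ^ 2 := by
    have h1 : (δ ^ 2)⁻¹ ≤ (N : ℝ) := Nat.le_ceil _
    have h2 : 0 < δ ^ 2 := by positivity
    calc (1:ℝ) = (δ ^ 2)⁻¹ * δ ^ 2 := by field_simp
      _ ≤ N * δ ^ 2 := by gcongr
  set K : ℕ := 2 ^ k * N * k + 1 + k + ⌈(4:ℝ) ^ k * N * δ⌉₊ with hKdef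
  refine ⟨K, ?_⟩
  intro n f hf hol
  obtain ⟨μ, ft, hμ0, hμ1, hft, hcon⟩ := hol
  set ν : (Fin k → Fin n) → ℝ := fun s => ∏ j, μ j (s j) with hνdef
  have hν0 : ∀ s, 0 ≤ ν s := fun s => Finset.prod_nonneg fun j _ => hμ0 j (s j)
  have hν1 : ∑ s, ν s = 1 := by
    rw [hνdef, sum_prod_eq (fun j i => μ j i)]
    simp [hμ1]
  set P : (Fin k → Finset (Fin n)) → (Fin k → Fin n) → ℝ :=
    fun B s => ∏ j, if s j ∈ B j then (1:ℝ) else 0 with hPdef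
  have hP : ∀ B s, P B s ∈ Set.Icc (0:ℝ) 1 := by
    intro B s
    constructor
    · exact Finset.prod_nonneg fun j _ => by split <;> norm_num
    · exact Finset.prod_le_one (fun j _ => by split <;> norm_num)
        (fun j _ => by split <;> norm_num)
  haveI : Nonempty (Fin k → Finset (Fin n)) := ⟨fun _ => ∅⟩
  have hfk := fun b : Fin k → Bool => fk_lemma ν hν0 hν1.le (fun s => ft s b)
      (fun s => hft s b) P hP δ hδ N hN
  choose σ B hσ hcut using hfk
  -- encoding of the variables
  have hcV : Fintype.card ((Fin k → Bool) × Fin N × Fin k) = 2 ^ k * N * k := by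
    rw [Fintype.card_prod, Fintype.card_prod, Fintype.card_fun, Fintype.card_bool,
      Fintype.card_fin, Fintype.card_fin]
    ring
  set m : ℕ := 2 ^ k * N * k + 1 with hmdef
  set e := Fintype.equivFin ((Fin k → Bool) × Fin N × Fin k) with hedef
  have hem : ∀ v, (e v : ℕ) < m := by
    intro v
    calc (e v : ℕ) < Fintype.card ((Fin k → Bool) × Fin N × Fin k) := (e v).isLt
      _ ≤ m := by rw [hcV, hmdef]; omega
  set emb : ((Fin k → Bool) × Fin N × Fin k) → Fin m := fun v => ⟨(e v : ℕ), hem v⟩ with hembdef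
  set wV : ((Fin k → Bool) × Fin N × Fin k) → Fin n → ℝ :=
    fun v a => if a ∈ B v.1 v.2.1 v.2.2 then μ v.2.2 a else 0 with hwVdef
  set w : Fin m → Fin n → ℝ :=
    fun i => if h : (i : ℕ) < Fintype.card ((Fin k → Bool) × Fin N × Fin k)
      then wV (e.symm ⟨(i : ℕ), h⟩) else 0 with hwdef
  have hwemb : ∀ v, w (emb v) = wV v := by
    intro v
    rw [hwdef]
    dsimp only
    rw [dif_pos ((e v).isLt)]
    congr 1
    have h1 : (⟨((emb v : Fin m) : ℕ), (e v).isLt⟩ : Fin (Fintype.card ((Fin k → Bool) × Fin N × Fin k))) = e v := by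
      apply Fin.ext
      rfl
    rw [h1, Equiv.symm_apply_apply]
  set cB : ((Fin k → Bool) × Fin N × Fin k) → ℝ :=
    fun v => ∑ a ∈ B v.1 v.2.1 v.2.2, μ v.2.2 a with hcBdef
  have hcB0 : ∀ v, 0 ≤ cB v := fun v => Finset.sum_nonneg fun a _ => hμ0 _ a
  have hcB1 : ∀ v, cB v ≤ 1 := by
    intro v
    rw [hcBdef]
    dsimp only
    rw [← hμ1 v.2.2]
    exact Finset.sum_le_sum_of_subset_of_nonneg (Finset.subset_univ _) (fun a _ _ => hμ0 _ a)
  set fac : ((Fin k → Bool) × Fin N × Fin k) → MvPolynomial (Fin m) ℝ :=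
    fun v => if v.1 v.2.2 = true then MvPolynomial.X (emb v)
      else MvPolynomial.C (cB v) - MvPolynomial.X (emb v) with hfacdef
  set p : MvPolynomial (Fin m) ℝ :=
    ∑ b : Fin k → Bool, ∑ r : Fin N, MvPolynomial.C (σ b r) * ∏ j : Fin k, fac (b, r, j) with hpdef
  have hm1 : 1 ≤ m := Nat.succ_le_succ (Nat.zero_le _)
  have hmK : m ≤ K := le_trans (Nat.le_add_right _ _) (Nat.le_add_right _ _)
  have hkK : k ≤ K := le_trans (Nat.le_add_left k (2 ^ k * N * k + 1)) (Nat.le_add_right _ _)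
  have hK1 : (1:ℝ) ≤ (K:ℝ) := by exact_mod_cast le_trans hm1 hmK
  -- linear form bounds
  have hwb : ∀ i, ∑ a, |w i a| ≤ (K:ℝ) := by
    intro i
    rw [hwdef]
    dsimp only
    split
    · refine le_trans ?_ hK1
      rename_i h
      set v := e.symm ⟨(i : ℕ), h⟩
      calc ∑ a, |wV v a| = ∑ a, wV v a := by
            refine Finset.sum_congr rfl fun a _ => abs_of_nonneg ?_
            rw [hwVdef]; dsimp only; split
            · exact hμ0 _ a
            · exact le_refl 0
        _ ≤ ∑ a, μ v.2.2 a := by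
            refine Finset.sum_le_sum fun a _ => ?_
            rw [hwVdef]; dsimp only; split
            · exact le_refl _
            · exact hμ0 _ a
        _ = 1 := hμ1 _
    · simp
  -- degree bound
  have hdeg : p.totalDegree ≤ K := by
    refine le_trans ?_ hkK
    rw [hpdef]
    refine le_trans (MvPolynomial.totalDegree_finset_sum _ _) (Finset.sup_le fun b _ => ?_)
    refine le_trans (MvPolynomial.totalDegree_finset_sum _ _) (Finset.sup_le fun r _ => ?_)
    refine le_trans (MvPolynomial.totalDegree_mul _ _) ?_
    rw [MvPolynomial.totalDegree_C, zero_add]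
    refine le_trans (MvPolynomial.totalDegree_finset_prod _ _) ?_
    have hfd : ∀ j : Fin k, (fac (b, r, j)).totalDegree ≤ 1 := by
      intro j
      rw [hfacdef]
      dsimp only
      split
      · rw [MvPolynomial.totalDegree_X]
      · refine le_trans (MvPolynomial.totalDegree_sub _ _) ?_
        simp [MvPolynomial.totalDegree_C, MvPolynomial.totalDegree_X]
    refine le_trans (Finset.sum_le_sum fun j _ => hfd j) ?_
    simp
  -- coefficient norm bound
  have hfacL1 : ∀ v, CoefL1 (fac v) ≤ 2 := by
    intro v
    rw [hfacdef]
    dsimp only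
    split
    · rw [CoefL1_X]; norm_num
    · refine le_trans (CoefL1_sub_le _ _) ?_
      rw [CoefL1_C, CoefL1_X, abs_of_nonneg (hcB0 v)]
      linarith [hcB1 v]
  have hL1 : (∑ d ∈ p.support, |MvPolynomial.coeff d p|) ≤ (K:ℝ) := by
    have h1 : CoefL1 p ≤ (2:ℝ) ^ k * N * (δ * 2 ^ k) := by
      rw [hpdef]
      refine le_trans (CoefL1_sum_le _ _) ?_
      have hbr : ∀ b : Fin k → Bool, ∀ r : Fin N,
          CoefL1 (MvPolynomial.C (σ b r) * ∏ j : Fin k, fac (b, r, j)) ≤ δ * 2 ^ k := by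
        intro b r
        refine le_trans (CoefL1_mul_le _ _) ?_
        rw [CoefL1_C]
        refine mul_le_mul (hσ b r) ?_ (CoefL1_nonneg _) hδ.le
        refine le_trans (CoefL1_prod_le _ _) ?_
        calc ∏ j : Fin k, CoefL1 (fac (b, r, j)) ≤ ∏ _j : Fin k, (2:ℝ) :=
              Finset.prod_le_prod (fun j _ => CoefL1_nonneg _) (fun j _ => hfacL1 _)
          _ = 2 ^ k := by simp
      calc ∑ b : Fin k → Bool, CoefL1 (∑ r : Fin N, MvPolynomial.C (σ b r) * ∏ j : Fin k, fac (b, r, j))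
          ≤ ∑ _b : Fin k → Bool, ∑ _r : Fin N, (δ * 2 ^ k) := by
            refine Finset.sum_le_sum fun b _ => ?_
            exact le_trans (CoefL1_sum_le _ _) (Finset.sum_le_sum fun r _ => hbr b r)
        _ = (2:ℝ) ^ k * N * (δ * 2 ^ k) := by
            simp [Finset.sum_const, Finset.card_univ, Fintype.card_fun]
            ring
    have h2 : (2:ℝ) ^ k * N * (δ * 2 ^ k) = 4 ^ k * N * δ := by
      rw [show (4:ℝ) = 2 * 2 by norm_num, mul_pow]
      ring
    have h3 : (4:ℝ) ^ k * N * δ ≤ (⌈(4:ℝ) ^ k * N * δ⌉₊ : ℝ) := Nat.le_ceil _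
    have h4 : ((⌈(4:ℝ) ^ k * N * δ⌉₊ : ℕ) : ℝ) ≤ (K:ℝ) := by
      have : ⌈(4:ℝ) ^ k * N * δ⌉₊ ≤ K := by rw [hKdef]; exact Nat.le_add_left _ _
      exact_mod_cast this
    calc (∑ d ∈ p.support, |MvPolynomial.coeff d p|) = CoefL1 p := rfl
      _ ≤ (2:ℝ) ^ k * N * (δ * 2 ^ k) := h1
      _ = 4 ^ k * N * δ := h2
      _ ≤ _ := h3
      _ ≤ (K:ℝ) := h4
  refine ⟨m, hm1, hmK, w, hwb, p, hdeg, hL1, ?_⟩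
  -- the main estimate
  intro x
  set y : Fin m → ℝ := fun i => ∑ a, w i a * (if x a then (1:ℝ) else 0) with hydef
  set g : ℝ := ∑ s, ν s * ft s (fun j => x (s j)) with hgdef
  set bev : ((Fin k → Bool) × Fin N × Fin k) → ℝ :=
    fun v => ∑ a, (μ v.2.2 a * (if a ∈ B v.1 v.2.1 v.2.2 then (1:ℝ) else 0))
      * (if x a = v.1 v.2.2 then (1:ℝ) else 0) with hbevdef
  have hyemb : ∀ v, y (emb v) = ∑ a, (μ v.2.2 a * (if a ∈ B v.1 v.2.1 v.2.2 then (1:ℝ) else 0))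
      * (if x a then (1:ℝ) else 0) := by
    intro v
    rw [hydef]
    dsimp only
    rw [hwemb v, hwVdef]
    refine Finset.sum_congr rfl fun a _ => ?_
    dsimp only
    split <;> simp
  have hevalfac : ∀ v, MvPolynomial.eval y (fac v) = bev v := by
    intro v
    rw [hfacdef, hbevdef]
    dsimp only
    by_cases hb : v.1 v.2.2 = true
    · rw [if_pos hb, MvPolynomial.eval_X, hyemb v]
      refine Finset.sum_congr rfl fun a _ => ?_
      rw [hb]
    · rw [if_neg hb, map_sub, MvPolynomial.eval_C, MvPolynomial.eval_X, hyemb v]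
      have hbf : v.1 v.2.2 = false := by revert hb; cases v.1 v.2.2 <;> simp
      rw [hbf]
      have e1 : ∀ a : Fin n, (μ v.2.2 a * (if a ∈ B v.1 v.2.1 v.2.2 then (1:ℝ) else 0))
          * (if x a = false then (1:ℝ) else 0)
          = μ v.2.2 a * (if a ∈ B v.1 v.2.1 v.2.2 then (1:ℝ) else 0)
            - (μ v.2.2 a * (if a ∈ B v.1 v.2.1 v.2.2 then (1:ℝ) else 0))
              * (if x a then (1:ℝ) else 0) := by
        intro a
        cases hxa : x a <;> simp [hxa]
      rw [Finset.sum_congr rfl fun a _ => e1 a, Finset.sum_sub_distrib]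
      congr 1
      rw [hcBdef]
      dsimp only
      simp only [mul_ite, mul_one, mul_zero, Finset.sum_ite_mem, Finset.univ_inter]
  have hevalp : MvPolynomial.eval y p = ∑ b : Fin k → Bool, ∑ r : Fin N,
      σ b r * ∏ j, bev (b, r, j) := by
    rw [hpdef, map_sum]
    refine Finset.sum_congr rfl fun b _ => ?_
    rw [map_sum]
    refine Finset.sum_congr rfl fun r _ => ?_
    rw [map_mul, MvPolynomial.eval_C, map_prod]
    congr 1
    exact Finset.prod_congr rfl fun j _ => hevalfac (b, r, j)
  have hboxprod : ∀ (b : Fin k → Bool) (r : Fin N),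
      ∑ s, ν s * P (B b r) s * (∏ j, if x (s j) = b j then (1:ℝ) else 0)
        = ∏ j, bev (b, r, j) := by
    intro b r
    have h1 : ∀ s : Fin k → Fin n, ν s * P (B b r) s * (∏ j, if x (s j) = b j then (1:ℝ) else 0)
        = ∏ j, ((μ j (s j) * (if s j ∈ B b r j then (1:ℝ) else 0))
            * (if x (s j) = b j then (1:ℝ) else 0)) := by
      intro s
      rw [hνdef, hPdef]
      dsimp only
      rw [← Finset.prod_mul_distrib, ← Finset.prod_mul_distrib]
    rw [Finset.sum_congr rfl fun s _ => h1 s,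
      sum_prod_eq (fun j i => (μ j i * (if i ∈ B b r j then (1:ℝ) else 0))
        * (if x i = b j then (1:ℝ) else 0))]
  have hBx : ∀ (b : Fin k → Bool) (s : Fin k → Fin n),
      P (fun j => Finset.univ.filter (fun a => x a = b j)) s
        = ∏ j, if x (s j) = b j then (1:ℝ) else 0 := by
    intro b s
    rw [hPdef]
    dsimp only
    exact Finset.prod_congr rfl fun j _ => by simp [Finset.mem_filter]
  have hcutb : ∀ b : Fin k → Bool,
      |(∑ s, ν s * ft s b * (∏ j, if x (s j) = b j then (1:ℝ) else 0))
        - ∑ r, σ b r * ∏ j, bev (b, r, j)| ≤ δ := by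
    intro b
    have h := hcut b (fun j => Finset.univ.filter (fun a => x a = b j))
    have h2 : ∑ s, ν s * (ft s b - ∑ r, σ b r * P (B b r) s)
          * P (fun j => Finset.univ.filter (fun a => x a = b j)) s
        = (∑ s, ν s * ft s b * (∏ j, if x (s j) = b j then (1:ℝ) else 0))
          - ∑ r, σ b r * ∏ j, bev (b, r, j) := by
      have h3 : ∀ s : Fin k → Fin n, ν s * (ft s b - ∑ r, σ b r * P (B b r) s)
            * P (fun j => Finset.univ.filter (fun a => x a = b j)) s
          = ν s * ft s b * (∏ j, if x (s j) = b j then (1:ℝ) else 0)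
            - ∑ r, σ b r * (ν s * P (B b r) s * (∏ j, if x (s j) = b j then (1:ℝ) else 0)) := by
        intro s
        rw [hBx b s]
        have hst : ∑ r, σ b r * (ν s * P (B b r) s * (∏ j, if x (s j) = b j then (1:ℝ) else 0))
            = (∑ r, σ b r * P (B b r) s) * (ν s * (∏ j, if x (s j) = b j then (1:ℝ) else 0)) := by
          rw [Finset.sum_mul]
          exact Finset.sum_congr rfl fun r _ => by ring
        rw [hst]
        ring
      rw [Finset.sum_congr rfl fun s _ => h3 s, Finset.sum_sub_distrib]
      congr 1
      rw [Finset.sum_comm]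
      refine Finset.sum_congr rfl fun r _ => ?_
      rw [← Finset.mul_sum, hboxprod b r]
    rwa [h2] at h
  have hsumb : ∑ b : Fin k → Bool,
      (∑ s, ν s * ft s b * (∏ j, if x (s j) = b j then (1:ℝ) else 0)) = g := by
    rw [Finset.sum_comm, hgdef]
    refine Finset.sum_congr rfl fun s _ => ?_
    have hq : ∀ b : Fin k → Bool, (∏ j, if x (s j) = b j then (1:ℝ) else 0)
        = if (fun j => x (s j)) = b then (1:ℝ) else 0 := by
      intro b
      by_cases hb : (fun j => x (s j)) = b
      · rw [if_pos hb]
        refine Finset.prod_eq_one fun j _ => ?_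
        rw [if_pos (congrFun hb j)]
      · rw [if_neg hb]
        have hex : ∃ j, x (s j) ≠ b j := by
          by_contra hc
          push_neg at hc
          exact hb (funext hc)
        obtain ⟨j0, hj0⟩ := hex
        exact Finset.prod_eq_zero (Finset.mem_univ j0) (if_neg hj0)
    rw [Finset.sum_congr rfl fun b _ => by rw [hq b]]
    simp only [mul_ite, mul_one, mul_zero]
    rw [Finset.sum_ite_eq Finset.univ (fun j => x (s j)) (fun b => ν s * ft s b)]
    simp
  have hC : |f x - g| ≤ 2 * ε := by
    have hfg : f x - g = ∑ s, ν s * (f x - ft s (fun j => x (s j))) := by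
      have h1 : ∑ s, ν s * (f x - ft s (fun j => x (s j)))
          = (∑ s, ν s * f x) - ∑ s, ν s * ft s (fun j => x (s j)) := by
        rw [← Finset.sum_sub_distrib]
        exact Finset.sum_congr rfl fun s _ => by ring
      have h2 : ∑ s, ν s * f x = f x := by
        rw [← Finset.sum_mul, hν1, one_mul]
      rw [h1, h2, hgdef]
    have hGcon : 1 - ε ≤ ∑ s, (if |f x - ft s (fun j => x (s j))| ≤ ε then ν s else 0) :=
      hcon x
    have habs : |f x - g| ≤ ∑ s, ν s * |f x - ft s (fun j => x (s j))| := by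
      rw [hfg]
      refine le_trans (Finset.abs_sum_le_sum_abs _ _) (Finset.sum_le_sum fun s _ => ?_)
      rw [abs_mul, abs_of_nonneg (hν0 s)]
    have hterm : ∀ s, ν s * |f x - ft s (fun j => x (s j))|
        ≤ ν s - (1 - ε) * (if |f x - ft s (fun j => x (s j))| ≤ ε then ν s else 0) := by
      intro s
      by_cases hs : |f x - ft s (fun j => x (s j))| ≤ ε
      · rw [if_pos hs]
        have h0 := hν0 s
        nlinarith [mul_le_mul_of_nonneg_left hs (hν0 s)]
      · rw [if_neg hs]
        have hd : |f x - ft s (fun j => x (s j))| ≤ 1 := by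
          have h1 := (hf x).1
          have h2 := (hf x).2
          have h3 := (hft s (fun j => x (s j))).1
          have h4 := (hft s (fun j => x (s j))).2
          rw [abs_le]
          constructor <;> linarith
        have h0 := hν0 s
        nlinarith
    calc |f x - g| ≤ ∑ s, ν s * |f x - ft s (fun j => x (s j))| := habs
      _ ≤ ∑ s, (ν s - (1 - ε) * (if |f x - ft s (fun j => x (s j))| ≤ ε then ν s else 0)) :=
          Finset.sum_le_sum fun s _ => hterm s
      _ = 1 - (1 - ε) * ∑ s, (if |f x - ft s (fun j => x (s j))| ≤ ε then ν s else 0) := by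
          rw [Finset.sum_sub_distrib, hν1, ← Finset.mul_sum]
      _ ≤ 2 * ε := by
          nlinarith [mul_nonneg (by linarith : (0:ℝ) ≤ 1 - ε)
            (by linarith [hGcon] : (0:ℝ) ≤ (∑ s, (if |f x - ft s (fun j => x (s j))| ≤ ε then ν s else 0)) - (1 - ε))]
  have hcomb : |g - MvPolynomial.eval y p| ≤ ε := by
    rw [hevalp, ← hsumb, ← Finset.sum_sub_distrib]
    refine le_trans (Finset.abs_sum_le_sum_abs _ _) ?_
    refine le_trans (Finset.sum_le_sum fun b _ => hcutb b) ?_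
    rw [Finset.sum_const, Finset.card_univ, nsmul_eq_mul]
    rw [Fintype.card_fun]
    simp only [Fintype.card_bool, Fintype.card_fin]
    rw [hδdef]
    push_cast
    exact le_of_eq (by field_simp)
  calc |f x - MvPolynomial.eval y p|
      ≤ |f x - g| + |g - MvPolynomial.eval y p| := abs_sub_le _ _ _
    _ ≤ 2 * ε + ε := add_le_add hC hcomb
    _ = 3 * ε := by ring
end

section
/- For every k, t ∈ ℕ, every η > 0, and every M₀ ∈ ℕ, set M = M₀·2^{k⌈tη^{-2}⌉}. Then for every finite set X, every choice of probability measures μ₁,…,μ_k on X, every collection of functions h₁,…,h_t : X^k → [0,1], and every initial partition 𝒫₀ of X into at most M₀ parts, there is a refinement 𝒫 of 𝒫₀ into at most M parts such that ‖h_i − E(h_i | 𝒫^k)‖_{□,k} ≤ η for every i ∈ {1,…,t}. -/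
/-- The conditional expectation of `h : X^k → ℝ` with respect to the product partition
`𝒫^k` (where the partition `𝒫` of `X` is encoded by a coloring `c : X → ι`) and the
product measure `μ₁ × ⋯ × μ_k`.  On cells of product measure zero the value is the junk
value `0` (division by zero), which is an admissible arbitrary choice. -/
noncomputable def condExpPart {X ι : Type*} [Fintype X] [DecidableEq ι] {k : ℕ}
    (μ : Fin k → X → ℝ) (c : X → ι) (h : (Fin k → X) → ℝ) (x : Fin k → X) : ℝ :=
  (∑ y : Fin k → X, if ∀ j, c (y j) = c (x j) then (∏ j, μ j (y j)) * h y else 0) /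
    (∑ y : Fin k → X, if ∀ j, c (y j) = c (x j) then ∏ j, μ j (y j) else 0)

namespace BoxReg
set_option linter.unusedSectionVars false

variable {X : Type*} [Fintype X] [DecidableEq X] {k : ℕ}

/-- product weight -/
noncomputable def wgt (μ : Fin k → X → ℝ) (x : Fin k → X) : ℝ := ∏ j, μ j (x j)

lemma wgt_nonneg {μ : Fin k → X → ℝ} (hμ0 : ∀ j a, 0 ≤ μ j a) (x : Fin k → X) :
    0 ≤ wgt μ x := Finset.prod_nonneg fun j _ => hμ0 j (x j)

lemma sum_wgt {μ : Fin k → X → ℝ} (hμ1 : ∀ j, ∑ a, μ j a = 1) :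
    ∑ x : Fin k → X, wgt μ x = 1 := by
  classical
  have : (∏ j : Fin k, ∑ a : X, μ j a) = ∑ x ∈ Fintype.piFinset (fun _ : Fin k => Finset.univ), ∏ j, μ j (x j) :=
    Finset.prod_univ_sum _ _
  rw [Fintype.piFinset_univ] at this
  simp only [hμ1, Finset.prod_const_one] at this
  simp only [wgt]; exact this.symm

variable {ι : Type*} [DecidableEq ι]

noncomputable def Sfun (μ : Fin k → X → ℝ) (c : X → ι) (p : Fin k → ι) : ℝ :=
  ∑ y : Fin k → X, if ∀ j, c (y j) = p j then wgt μ y else 0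

noncomputable def Tfun (μ : Fin k → X → ℝ) (c : X → ι) (h : (Fin k → X) → ℝ)
    (p : Fin k → ι) : ℝ :=
  ∑ y : Fin k → X, if ∀ j, c (y j) = p j then wgt μ y * h y else 0

noncomputable def Gfun (μ : Fin k → X → ℝ) (c : X → ι) (h : (Fin k → X) → ℝ)
    (p : Fin k → ι) : ℝ := Tfun μ c h p / Sfun μ c p

lemma condExpPart_eq (μ : Fin k → X → ℝ) (c : X → ι) (h : (Fin k → X) → ℝ)
    (x : Fin k → X) : condExpPart μ c h x = Gfun μ c h (fun j => c (x j)) := rfl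

section
variable [Fintype ι]

lemma sum_filter_wgt (μ : Fin k → X → ℝ) (c : X → ι) (p : Fin k → ι) :
    ∑ x ∈ Finset.univ.filter (fun x : Fin k → X => (fun j => c (x j)) = p), wgt μ x
      = Sfun μ c p := by
  rw [Finset.sum_filter, Sfun]
  simp only [funext_iff]

lemma sum_filter_wgt_mul (μ : Fin k → X → ℝ) (c : X → ι) (h : (Fin k → X) → ℝ)
    (p : Fin k → ι) :
    ∑ x ∈ Finset.univ.filter (fun x : Fin k → X => (fun j => c (x j)) = p), wgt μ x * h x
      = Tfun μ c h p := by
  rw [Finset.sum_filter, Tfun]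
  simp only [funext_iff]

lemma avg (μ : Fin k → X → ℝ) (hμ0 : ∀ j a, 0 ≤ μ j a) (c : X → ι)
    (h : (Fin k → X) → ℝ) (g : (Fin k → ι) → ℝ) :
    ∑ x : Fin k → X, wgt μ x * (h x - condExpPart μ c h x) * g (fun j => c (x j)) = 0 := by
  classical
  rw [← Finset.sum_fiberwise Finset.univ (fun x : Fin k → X => (fun j => c (x j)))
    (fun x => wgt μ x * (h x - condExpPart μ c h x) * g (fun j => c (x j)))]
  apply Finset.sum_eq_zero
  intro p _
  have hmem : ∀ x ∈ Finset.univ.filter (fun x : Fin k → X => (fun j => c (x j)) = p),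
      (fun j => c (x j)) = p := fun x hx => (Finset.mem_filter.mp hx).2
  by_cases hS : Sfun μ c p = 0
  · apply Finset.sum_eq_zero
    intro x hx
    have h0 : ∀ y ∈ (Finset.univ : Finset (Fin k → X)),
        0 ≤ (if ∀ j, c (y j) = p j then wgt μ y else 0) := by
      intro y _
      split
      · exact wgt_nonneg hμ0 y
      · exact le_refl 0
    have hterm := (Finset.sum_eq_zero_iff_of_nonneg h0).mp hS x (Finset.mem_univ x)
    have hc : ∀ j, c (x j) = p j := fun j => congrFun (hmem x hx) j
    have hw : wgt μ x = 0 := by simpa [hc] using hterm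
    simp [hw]
  · have hcong : ∀ x ∈ Finset.univ.filter (fun x : Fin k → X => (fun j => c (x j)) = p),
        wgt μ x * (h x - condExpPart μ c h x) * g (fun j => c (x j))
          = wgt μ x * h x * g p - wgt μ x * (Gfun μ c h p * g p) := by
      intro x hx
      rw [condExpPart_eq, hmem x hx]
      ring
    rw [Finset.sum_congr rfl hcong, Finset.sum_sub_distrib, ← Finset.sum_mul,
      ← Finset.sum_mul, sum_filter_wgt, sum_filter_wgt_mul, Gfun]
    field_simp
    ring


noncomputable def en (μ : Fin k → X → ℝ) (c : X → ι) (h : (Fin k → X) → ℝ) : ℝ :=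
  ∑ x : Fin k → X, wgt μ x * (condExpPart μ c h x)^2

lemma en_nonneg (μ : Fin k → X → ℝ) (hμ0 : ∀ j a, 0 ≤ μ j a) (c : X → ι)
    (h : (Fin k → X) → ℝ) : 0 ≤ en μ c h :=
  Finset.sum_nonneg fun x _ => mul_nonneg (wgt_nonneg hμ0 x) (sq_nonneg _)

lemma en_le_one (μ : Fin k → X → ℝ) (hμ0 : ∀ j a, 0 ≤ μ j a) (hμ1 : ∀ j, ∑ a, μ j a = 1)
    (c : X → ι) (h : (Fin k → X) → ℝ) (hh : ∀ x, h x ∈ Set.Icc (0:ℝ) 1) :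
    en μ c h ≤ 1 := by
  have key : ∀ x : Fin k → X, wgt μ x * (condExpPart μ c h x)^2 ≤ wgt μ x := by
    intro x
    rcases eq_or_lt_of_le (wgt_nonneg hμ0 x) with hw | hw
    · rw [← hw]; simp
    · have hSx : wgt μ x ≤ Sfun μ c (fun j => c (x j)) := by
        have := Finset.single_le_sum (f := fun y : Fin k → X =>
            if ∀ j, c (y j) = c (x j) then wgt μ y else 0)
          (fun y _ => by split; exacts [wgt_nonneg hμ0 y, le_refl 0]) (Finset.mem_univ x)
        simpa [Sfun] using this
      have hS : 0 < Sfun μ c (fun j => c (x j)) := lt_of_lt_of_le hw hSx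
      have hT0 : 0 ≤ Tfun μ c h (fun j => c (x j)) :=
        Finset.sum_nonneg fun y _ => by
          split
          · exact mul_nonneg (wgt_nonneg hμ0 y) (hh y).1
          · exact le_refl 0
      have hTS : Tfun μ c h (fun j => c (x j)) ≤ Sfun μ c (fun j => c (x j)) :=
        Finset.sum_le_sum fun y _ => by
          split
          · calc wgt μ y * h y ≤ wgt μ y * 1 :=
                mul_le_mul_of_nonneg_left (hh y).2 (wgt_nonneg hμ0 y)
            _ = wgt μ y := mul_one _
          · exact le_refl 0
      have hE0 : 0 ≤ condExpPart μ c h x := by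
        rw [condExpPart_eq, Gfun]; exact div_nonneg hT0 hS.le
      have hE1 : condExpPart μ c h x ≤ 1 := by
        rw [condExpPart_eq, Gfun, div_le_one hS]; exact hTS
      calc wgt μ x * (condExpPart μ c h x)^2 ≤ wgt μ x * 1 :=
          mul_le_mul_of_nonneg_left (pow_le_one₀ hE0 hE1) (wgt_nonneg hμ0 x)
        _ = wgt μ x := mul_one _
  calc en μ c h ≤ ∑ x : Fin k → X, wgt μ x := Finset.sum_le_sum fun x _ => key x
    _ = 1 := sum_wgt hμ1

lemma en_add (μ : Fin k → X → ℝ) (hμ0 : ∀ j a, 0 ≤ μ j a)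
    {ι' : Type*} [Fintype ι'] [DecidableEq ι']
    (c : X → ι) (c' : X → ι') (r : ι' → ι) (hr : ∀ a, c a = r (c' a))
    (h : (Fin k → X) → ℝ) :
    en μ c' h = en μ c h +
      ∑ x : Fin k → X, wgt μ x * (condExpPart μ c' h x - condExpPart μ c h x)^2 := by
  have h1 : ∑ x : Fin k → X, wgt μ x * (h x - condExpPart μ c h x) * condExpPart μ c h x
      = 0 := by
    have := avg μ hμ0 c h (Gfun μ c h)
    simpa only [← condExpPart_eq] using this
  have h2 : ∑ x : Fin k → X, wgt μ x * (h x - condExpPart μ c' h x) * condExpPart μ c h x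
      = 0 := by
    have := avg μ hμ0 c' h (fun q => Gfun μ c h (fun j => r (q j)))
    simp only [← hr] at this
    simpa only [← condExpPart_eq] using this
  have h3 : ∑ x : Fin k → X,
      wgt μ x * (condExpPart μ c' h x - condExpPart μ c h x) * condExpPart μ c h x = 0 := by
    have e : ∀ x : Fin k → X,
        wgt μ x * (condExpPart μ c' h x - condExpPart μ c h x) * condExpPart μ c h x
        = wgt μ x * (h x - condExpPart μ c h x) * condExpPart μ c h x
          - wgt μ x * (h x - condExpPart μ c' h x) * condExpPart μ c h x := fun x => by ring
    rw [Finset.sum_congr rfl (fun x _ => e x), Finset.sum_sub_distrib, h1, h2, sub_zero]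
  have expand : ∀ x : Fin k → X, wgt μ x * (condExpPart μ c' h x)^2
      = (wgt μ x * (condExpPart μ c h x)^2
        + wgt μ x * (condExpPart μ c' h x - condExpPart μ c h x)^2)
        + 2 * (wgt μ x * (condExpPart μ c' h x - condExpPart μ c h x)
            * condExpPart μ c h x) := fun x => by ring
  rw [en, Finset.sum_congr rfl (fun x _ => expand x), Finset.sum_add_distrib,
    Finset.sum_add_distrib, ← Finset.mul_sum, h3, mul_zero, add_zero, en]

lemma cs {α : Type*} [Fintype α] (w f : α → ℝ) (hw : ∀ x, 0 ≤ w x) (hw1 : ∑ x, w x ≤ 1)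
    (P : α → Prop) [DecidablePred P] :
    (∑ x, if P x then w x * f x else 0)^2 ≤ ∑ x, w x * f x^2 := by
  have hnn : ∀ x, 0 ≤ (if P x then w x else 0 : ℝ) := by
    intro x; split; exacts [hw x, le_refl 0]
  have key := Finset.sum_mul_sq_le_sq_mul_sq Finset.univ
    (fun x => Real.sqrt (if P x then w x else 0))
    (fun x => Real.sqrt (if P x then w x else 0) * f x)
  have e1 : ∀ x, Real.sqrt (if P x then w x else 0)
      * (Real.sqrt (if P x then w x else 0) * f x) = if P x then w x * f x else 0 := by
    intro x
    rw [← mul_assoc, Real.mul_self_sqrt (hnn x)]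
    split <;> simp
  have e2 : ∀ x, (Real.sqrt (if P x then w x else 0))^2 = if P x then w x else 0 :=
    fun x => Real.sq_sqrt (hnn x)
  have e3 : ∀ x, (Real.sqrt (if P x then w x else 0) * f x)^2
      = (if P x then w x else 0) * f x^2 := by
    intro x; rw [mul_pow, e2]
  simp only [e1, e2, e3] at key
  have b1 : ∑ x, (if P x then w x else 0 : ℝ) ≤ 1 := by
    calc ∑ x, (if P x then w x else 0 : ℝ) ≤ ∑ x, w x :=
        Finset.sum_le_sum fun x _ => by split; exacts [le_refl _, hw x]
      _ ≤ 1 := hw1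
  have b2 : ∑ x, (if P x then w x else 0 : ℝ) * f x^2 ≤ ∑ x, w x * f x^2 :=
    Finset.sum_le_sum fun x _ => by
      split
      · exact le_refl _
      · rw [zero_mul]; exact mul_nonneg (hw x) (sq_nonneg _)
  calc (∑ x, if P x then w x * f x else 0 : ℝ)^2
      ≤ (∑ x, (if P x then w x else 0 : ℝ)) * ∑ x, (if P x then w x else 0 : ℝ) * f x^2 :=
        key
    _ ≤ 1 * ∑ x, w x * f x^2 := by
        apply mul_le_mul b1 b2
        · exact Finset.sum_nonneg fun x _ => mul_nonneg (hnn x) (sq_nonneg _)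
        · exact zero_le_one
    _ = _ := one_mul _


lemma condExpPart_comp_inj {κ : Type*} [DecidableEq κ] (μ : Fin k → X → ℝ)
    (e : ι → κ) (he : Function.Injective e) (c : X → ι) (h : (Fin k → X) → ℝ) :
    condExpPart μ (fun a => e (c a)) h = condExpPart μ c h := by
  funext x
  simp only [condExpPart, he.eq_iff]

lemma increment (μ : Fin k → X → ℝ) (hμ0 : ∀ j a, 0 ≤ μ j a) (hμ1 : ∀ j, ∑ a, μ j a = 1)
    {t : ℕ} (h : Fin t → (Fin k → X) → ℝ)
    (c : X → ι) (i₀ : Fin t) (A : Fin k → Finset X) :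
    (∑ x : Fin k → X,
        if ∀ j, x j ∈ A j then wgt μ x * (h i₀ x - condExpPart μ c (h i₀) x) else 0)^2
      + ∑ i, en μ c (h i)
    ≤ ∑ i, en μ (fun a => (c a, fun j => decide (a ∈ A j))) (h i) := by
  classical
  set c' : X → ι × (Fin k → Bool) := fun a => (c a, fun j => decide (a ∈ A j)) with hc'
  have hen : ∀ i, en μ c' (h i) = en μ c (h i)
      + ∑ x : Fin k → X, wgt μ x * (condExpPart μ c' (h i) x - condExpPart μ c (h i) x)^2 :=
    fun i => en_add μ hμ0 c c' Prod.fst (fun a => rfl) (h i)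
  have hzero : ∑ x : Fin k → X,
      (if ∀ j, x j ∈ A j then wgt μ x * (h i₀ x - condExpPart μ c' (h i₀) x) else 0) = 0 := by
    have havg := avg μ hμ0 c' (h i₀)
      (fun q => if ∀ j, (q j).2 j = true then (1:ℝ) else 0)
    simp only [hc', decide_eq_true_eq] at havg
    have e0 : ∀ x : Fin k → X,
        (if ∀ j, x j ∈ A j then wgt μ x * (h i₀ x - condExpPart μ c' (h i₀) x) else 0)
        = wgt μ x * (h i₀ x - condExpPart μ c' (h i₀) x)
            * (if ∀ j, x j ∈ A j then 1 else 0) := by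
      intro x
      by_cases hP : ∀ j, x j ∈ A j <;> simp [hP]
    rw [Finset.sum_congr rfl (fun x _ => e0 x)]
    exact havg
  have hbox : (∑ x : Fin k → X,
        if ∀ j, x j ∈ A j then wgt μ x * (h i₀ x - condExpPart μ c (h i₀) x) else 0)
      = ∑ x : Fin k → X, (if ∀ j, x j ∈ A j then
          wgt μ x * (condExpPart μ c' (h i₀) x - condExpPart μ c (h i₀) x) else 0) := by
    have e : ∀ x : Fin k → X,
        (if ∀ j, x j ∈ A j then wgt μ x * (h i₀ x - condExpPart μ c (h i₀) x) else 0)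
        = (if ∀ j, x j ∈ A j then
            wgt μ x * (condExpPart μ c' (h i₀) x - condExpPart μ c (h i₀) x) else 0)
          + (if ∀ j, x j ∈ A j then
            wgt μ x * (h i₀ x - condExpPart μ c' (h i₀) x) else 0) := by
      intro x
      split
      · ring
      · simp
    rw [Finset.sum_congr rfl (fun x _ => e x), Finset.sum_add_distrib, hzero, add_zero]
  have hcs : (∑ x : Fin k → X, (if ∀ j, x j ∈ A j then
        wgt μ x * (condExpPart μ c' (h i₀) x - condExpPart μ c (h i₀) x) else 0))^2
      ≤ ∑ x : Fin k → X,
        wgt μ x * (condExpPart μ c' (h i₀) x - condExpPart μ c (h i₀) x)^2 :=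
    cs (wgt μ) (fun x => condExpPart μ c' (h i₀) x - condExpPart μ c (h i₀) x)
      (wgt_nonneg hμ0) (le_of_eq (sum_wgt hμ1)) _
  have hD0 : ∀ i, 0 ≤ ∑ x : Fin k → X,
      wgt μ x * (condExpPart μ c' (h i) x - condExpPart μ c (h i) x)^2 :=
    fun i => Finset.sum_nonneg fun x _ => mul_nonneg (wgt_nonneg hμ0 x) (sq_nonneg _)
  have hsingle : ∑ x : Fin k → X,
        wgt μ x * (condExpPart μ c' (h i₀) x - condExpPart μ c (h i₀) x)^2
      ≤ ∑ i, ∑ x : Fin k → X,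
        wgt μ x * (condExpPart μ c' (h i) x - condExpPart μ c (h i) x)^2 :=
    Finset.single_le_sum (fun i _ => hD0 i) (Finset.mem_univ i₀)
  have : ∑ i, en μ c' (h i) = ∑ i, en μ c (h i)
      + ∑ i, ∑ x : Fin k → X,
        wgt μ x * (condExpPart μ c' (h i) x - condExpPart μ c (h i) x)^2 := by
    rw [← Finset.sum_add_distrib]
    exact Finset.sum_congr rfl fun i _ => hen i
  rw [hbox, this]
  linarith [hcs, hsingle]

lemma main_ind (μ : Fin k → X → ℝ) (hμ0 : ∀ j a, 0 ≤ μ j a) (hμ1 : ∀ j, ∑ a, μ j a = 1)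
    {t : ℕ} (h : Fin t → (Fin k → X) → ℝ)
    (η : ℝ) (hη : 0 < η) {m₀ : ℕ} (c₀ : X → Fin m₀) (n : ℕ) :
    ∃ (κ : Type) (_ : Fintype κ) (_ : DecidableEq κ) (c : X → κ),
      Fintype.card κ ≤ m₀ * 2^(k*n) ∧ (∀ x y, c x = c y → c₀ x = c₀ y) ∧
      ((∀ (i : Fin t) (A : Fin k → Finset X), |∑ x : Fin k → X,
          if ∀ j, x j ∈ A j then wgt μ x * (h i x - condExpPart μ c (h i) x) else 0| ≤ η)
        ∨ (n : ℝ) * η^2 ≤ ∑ i, en μ c (h i)) := by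
  induction n with
  | zero =>
    refine ⟨Fin m₀, inferInstance, inferInstance, c₀, by simp, fun x y hxy => hxy,
      Or.inr ?_⟩
    simpa using Finset.sum_nonneg fun i _ => en_nonneg μ hμ0 c₀ (h i)
  | succ n ih =>
    obtain ⟨κ, hF, hD, c, hcard, href, hdisj⟩ := ih
    have hcard' : m₀ * 2 ^ (k * n) * 2 ^ k ≤ m₀ * 2 ^ (k * (n+1)) := by
      rw [mul_assoc, ← pow_add, Nat.mul_succ]
    obtain hgood | hgood := Classical.em (∀ (i : Fin t) (A : Fin k → Finset X),
        |∑ x : Fin k → X,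
          if ∀ j, x j ∈ A j then wgt μ x * (h i x - condExpPart μ c (h i) x) else 0| ≤ η)
    · refine ⟨κ, hF, hD, c, le_trans hcard ?_, href, Or.inl hgood⟩
      calc m₀ * 2^(k*n) ≤ m₀ * 2^(k*n) * 2^k := Nat.le_mul_of_pos_right _ (by positivity)
        _ ≤ _ := hcard'
    · rcases hdisj with hgood' | hen
      · exact absurd hgood' hgood
      push_neg at hgood
      obtain ⟨i₀, A, hA⟩ := hgood
      refine ⟨κ × (Fin k → Bool), inferInstance, inferInstance,
        fun a => (c a, fun j => decide (a ∈ A j)), ?_, ?_, Or.inr ?_⟩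
      · have : Fintype.card (κ × (Fin k → Bool)) = Fintype.card κ * 2^k := by
          simp [Fintype.card_prod, Fintype.card_fun]
        rw [this]
        exact le_trans (Nat.mul_le_mul_right _ hcard) hcard'
      · intro x y hxy
        exact href x y (congrArg Prod.fst hxy)
      · have hinc := increment μ hμ0 hμ1 h c i₀ A
        have hsq : η^2 ≤ (∑ x : Fin k → X,
            if ∀ j, x j ∈ A j then wgt μ x * (h i₀ x - condExpPart μ c (h i₀) x) else 0)^2 := by
          have := pow_le_pow_left₀ hη.le hA.le 2
          simpa [sq_abs] using this
        push_cast
        linarith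

end

end BoxReg

/-- Simultaneous weak box regularity.
For every `k, t ∈ ℕ`, `η > 0` and `M₀ ∈ ℕ`, with `M = M₀·2^(k⌈t/η²⌉)`: for every finite
set `X`, discrete probability measures `μ₁,…,μ_k` on `X`, functions
`h₁,…,h_t : X^k → [0,1]`, and every initial partition of `X` into at most `M₀` parts
(encoded as a coloring `c₀ : X → Fin m₀` with `m₀ ≤ M₀`), there is a refinement into at
most `M` parts (a coloring `c : X → Fin m`, `m ≤ M`, with `c x = c y → c₀ x = c₀ y`)
such that `‖h_i - E(h_i | 𝒫^k)‖_{□,k} ≤ η` for every `i`, i.e. the box integral of the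
difference against every product set `A₁ × ⋯ × A_k` is at most `η` in absolute value. -/
theorem simultaneous_weak_box_regularity (k t : ℕ) (η : ℝ) (hη : 0 < η) (M₀ : ℕ)
    (X : Type*) [Fintype X] [DecidableEq X]
    (μ : Fin k → X → ℝ) (hμ0 : ∀ j a, 0 ≤ μ j a) (hμ1 : ∀ j, ∑ a, μ j a = 1)
    (h : Fin t → (Fin k → X) → ℝ) (hh : ∀ i x, h i x ∈ Set.Icc (0 : ℝ) 1)
    (m₀ : ℕ) (hm₀ : m₀ ≤ M₀) (c₀ : X → Fin m₀) :
    ∃ m : ℕ, m ≤ M₀ * 2 ^ (k * ⌈(t : ℝ) / η ^ 2⌉₊) ∧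
      ∃ c : X → Fin m,
        (∀ x y : X, c x = c y → c₀ x = c₀ y) ∧
        ∀ i : Fin t, ∀ A : Fin k → Finset X,
          |∑ x : Fin k → X,
              (if ∀ j, x j ∈ A j then
                (∏ j, μ j (x j)) * (h i x - condExpPart μ c (h i) x) else 0)| ≤ η := by
  classical
  set N := ⌈(t : ℝ) / η ^ 2⌉₊ with hN
  obtain ⟨κ, hF, hD, c, hcard, href, hdisj⟩ := BoxReg.main_ind μ hμ0 hμ1 h η hη c₀ N
  have hcard2 : Fintype.card κ ≤ M₀ * 2 ^ (k * N) :=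
    le_trans hcard (Nat.mul_le_mul_right _ hm₀)
  have hη2 : (0:ℝ) < η ^ 2 := by positivity
  have htN : (t : ℝ) ≤ (N : ℝ) * η ^ 2 := by
    have hle := Nat.le_ceil ((t : ℝ) / η ^ 2)
    rw [← hN] at hle
    calc (t : ℝ) = (t : ℝ) / η ^ 2 * η ^ 2 := by field_simp
      _ ≤ (N : ℝ) * η ^ 2 := mul_le_mul_of_nonneg_right hle hη2.le
  have hgood : ∀ (i : Fin t) (A : Fin k → Finset X), |∑ x : Fin k → X,
      if ∀ j, x j ∈ A j then BoxReg.wgt μ x * (h i x - condExpPart μ c (h i) x) else 0| ≤ η := by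
    rcases hdisj with hg | hen
    · exact hg
    obtain hg | hg := Classical.em (∀ (i : Fin t) (A : Fin k → Finset X),
        |∑ x : Fin k → X,
          if ∀ j, x j ∈ A j then BoxReg.wgt μ x * (h i x - condExpPart μ c (h i) x) else 0| ≤ η)
    · exact hg
    exfalso
    push_neg at hg
    obtain ⟨i₀, A, hA⟩ := hg
    have hinc := BoxReg.increment μ hμ0 hμ1 h c i₀ A
    have hsq : η ^ 2 ≤ (∑ x : Fin k → X,
        if ∀ j, x j ∈ A j then BoxReg.wgt μ x * (h i₀ x - condExpPart μ c (h i₀) x) else 0) ^ 2 := by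
      have := pow_le_pow_left₀ hη.le hA.le 2
      simpa [sq_abs] using this
    have hupper : ∑ i, BoxReg.en μ (fun a => (c a, fun j => decide (a ∈ A j))) (h i) ≤ (t : ℝ) := by
      calc ∑ i, BoxReg.en μ (fun a => (c a, fun j => decide (a ∈ A j))) (h i)
          ≤ ∑ _i : Fin t, (1:ℝ) :=
            Finset.sum_le_sum fun i _ => BoxReg.en_le_one μ hμ0 hμ1 _ (h i) (hh i)
        _ = (t : ℝ) := by simp
    linarith
  refine ⟨Fintype.card κ, hcard2, fun a => Fintype.equivFin κ (c a), ?_, ?_⟩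
  · intro x y hxy
    exact href x y ((Fintype.equivFin κ).injective hxy)
  · intro i A
    rw [BoxReg.condExpPart_comp_inj μ (Fintype.equivFin κ) (Fintype.equivFin κ).injective c (h i)]
    exact hgood i A
end

section
/- Let X be a finite set with probability measures μ₁,…,μ_k, let h : X^k → [0,1], let 𝒫 be a partition of X, and let η > 0. Suppose there exist sets A₁,…,A_k ⊆ X such that, with r = h − E(h | 𝒫^k) and φ = ∏_{j=1}^k 1_{A_j}, one has |⟨r, φ⟩| > η, where the inner product is with respect to the product measure μ₁ × ⋯ × μ_k. Let 𝒬 be the common refinement of 𝒫 by the sets A₁,…,A_k. Then 𝒬 has at most 2^k·|𝒫| parts and ‖E(h | 𝒬^k)‖₂² ≥ ‖E(h | 𝒫^k)‖₂² + η², where the L² norm is taken with respect to μ₁ × ⋯ × μ_k. -/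
section Aux
variable {X κ : Type*} [Fintype X] [DecidableEq κ] {k : ℕ}

lemma orth (μ : Fin k → X → ℝ) (hμ0 : ∀ j a, 0 ≤ μ j a)
    (d : X → κ) (h g : (Fin k → X) → ℝ)
    (hg : ∀ x y : Fin k → X, (∀ j, d (x j) = d (y j)) → g x = g y) :
    ∑ x : Fin k → X, (∏ j, μ j (x j)) * (h x - condExpPart μ d h x) * g x = 0 := by
  classical
  set w : (Fin k → X) → ℝ := fun x => ∏ j, μ j (x j) with hwdef
  set D : (Fin k → X) → ℝ :=
    fun x => ∑ y : Fin k → X, if ∀ j, d (y j) = d (x j) then w y else 0 with hDdef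
  set N : (Fin k → X) → ℝ :=
    fun x => ∑ y : Fin k → X, if ∀ j, d (y j) = d (x j) then w y * h y else 0 with hNdef
  have hE : ∀ x, condExpPart μ d h x = N x / D x := fun x => rfl
  have hw0 : ∀ x, 0 ≤ w x := fun x => Finset.prod_nonneg fun j _ => hμ0 j (x j)
  have hwD : ∀ x, w x ≤ D x := by
    intro x
    have := Finset.single_le_sum
      (f := fun y : Fin k → X => if ∀ j, d (y j) = d (x j) then w y else 0)
      (fun y _ => by split_ifs; exacts [hw0 y, le_rfl]) (Finset.mem_univ x)
    simpa using this
  have hD0 : ∀ x, D x = 0 → w x = 0 := fun x h0 => le_antisymm (h0 ▸ hwD x) (hw0 x)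
  have key : ∑ x : Fin k → X, w x * condExpPart μ d h x * g x
      = ∑ x : Fin k → X, w x * h x * g x := by
    calc ∑ x : Fin k → X, w x * condExpPart μ d h x * g x
        = ∑ x : Fin k → X, ∑ y : Fin k → X,
            if ∀ j, d (y j) = d (x j) then (w x * g x / D x) * (w y * h y) else 0 := by
          refine Finset.sum_congr rfl fun x _ => ?_
          have h1 : w x * condExpPart μ d h x * g x = (w x * g x / D x) * N x := by
            rw [hE x]; ring
          rw [h1, hNdef, Finset.mul_sum]
          exact Finset.sum_congr rfl fun y _ => by rw [mul_ite, mul_zero]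
      _ = ∑ y : Fin k → X, ∑ x : Fin k → X,
            if ∀ j, d (y j) = d (x j) then (w x * g x / D x) * (w y * h y) else 0 :=
          Finset.sum_comm
      _ = ∑ y : Fin k → X, w y * h y * g y := by
          refine Finset.sum_congr rfl fun y _ => ?_
          by_cases hDy : D y = 0
          · have hwy : w y = 0 := hD0 y hDy
            rw [Finset.sum_eq_zero, hwy]
            · ring
            · intro x _
              split_ifs with hc
              · rw [hwy]; ring
              · rfl
          · have hsum : (∑ x : Fin k → X,
                if ∀ j, d (y j) = d (x j) then (w x * g x / D x) * (w y * h y) else 0)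
                = ∑ x : Fin k → X,
                  if ∀ j, d (y j) = d (x j) then w x * (w y * h y * g y) / D y else 0 := by
              refine Finset.sum_congr rfl fun x _ => ?_
              split_ifs with hc
              · have hgx : g x = g y := hg x y fun j => (hc j).symm
                have hDx : D x = D y := by
                  rw [hDdef]
                  refine Finset.sum_congr rfl fun z _ => ?_
                  have hiff : (∀ j, d (z j) = d (x j)) ↔ (∀ j, d (z j) = d (y j)) := by
                    constructor <;> intro H j
                    · rw [H j]; exact (hc j).symm
                    · rw [H j]; exact hc j
                  exact if_congr hiff rfl rfl
                rw [hgx, hDx]; ring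
              · rfl
            rw [hsum]
            have h2 : (∑ x : Fin k → X,
                if ∀ j, d (y j) = d (x j) then w x * (w y * h y * g y) / D y else 0)
                = (∑ x : Fin k → X, if ∀ j, d (y j) = d (x j) then w x else 0)
                  * (w y * h y * g y) / D y := by
              rw [Finset.sum_mul, Finset.sum_div]
              refine Finset.sum_congr rfl fun x _ => ?_
              split_ifs <;> simp
            rw [h2]
            have hDsym : (∑ x : Fin k → X, if ∀ j, d (y j) = d (x j) then w x else 0) = D y := by
              rw [hDdef]
              refine Finset.sum_congr rfl fun x _ => ?_
              exact if_congr (forall_congr' fun j => eq_comm) rfl rfl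
            rw [hDsym]
            field_simp
  have hsplit : ∑ x : Fin k → X, w x * (h x - condExpPart μ d h x) * g x
      = (∑ x : Fin k → X, w x * h x * g x) - ∑ x : Fin k → X, w x * condExpPart μ d h x * g x := by
    rw [← Finset.sum_sub_distrib]
    exact Finset.sum_congr rfl fun x _ => by ring
  rw [hsplit, key, sub_self]

lemma condExpPart_congr (μ : Fin k → X → ℝ) (d : X → κ) (h : (Fin k → X) → ℝ)
    {x y : Fin k → X} (hxy : ∀ j, d (x j) = d (y j)) :
    condExpPart μ d h x = condExpPart μ d h y := by
  have hiff : ∀ z : Fin k → X, (∀ j, d (z j) = d (x j)) ↔ (∀ j, d (z j) = d (y j)) := by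
    intro z; constructor <;> intro H j
    · rw [H j]; exact hxy j
    · rw [H j]; exact (hxy j).symm
  unfold condExpPart
  rw [Finset.sum_congr rfl fun z _ => if_congr (hiff z) rfl rfl,
    Finset.sum_congr rfl fun z _ => if_congr (hiff z) rfl rfl]

end Aux

/-- Energy increment step.
Let `X` be finite with discrete probability measures `μ₁,…,μ_k`, `h : X^k → [0,1]`,
`𝒫` a partition of `X` into `m` parts (a coloring `c : X → Fin m`), and `η > 0`.
Suppose there are sets `A₁,…,A_k ⊆ X` such that, with `r = h - E(h | 𝒫^k)` and
`φ = ∏_j 1_{A_j}`, one has `|⟨r,φ⟩| > η` with respect to `μ₁ × ⋯ × μ_k`.  Let `𝒬` be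
the common refinement of `𝒫` by `A₁,…,A_k` (the coloring
`a ↦ (c a, (1_{a ∈ A_j})_j)` into `Fin m × (Fin k → Bool)`).  Then `𝒬` has at most
`2^k·m` parts and `‖E(h | 𝒬^k)‖₂² ≥ ‖E(h | 𝒫^k)‖₂² + η²`. -/
theorem energy_increment (X : Type*) [Fintype X] [DecidableEq X] (k m : ℕ)
    (μ : Fin k → X → ℝ) (hμ0 : ∀ j a, 0 ≤ μ j a) (hμ1 : ∀ j, ∑ a, μ j a = 1)
    (h : (Fin k → X) → ℝ) (hh : ∀ x, h x ∈ Set.Icc (0 : ℝ) 1)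
    (c : X → Fin m) (η : ℝ) (hη : 0 < η) (A : Fin k → Finset X)
    (hcorr : η < |∑ x : Fin k → X,
        (∏ j, μ j (x j)) * (h x - condExpPart μ c h x) *
          ∏ j, (if x j ∈ A j then (1 : ℝ) else 0)|) :
    Fintype.card (Fin m × (Fin k → Bool)) ≤ 2 ^ k * m ∧
    (∑ x : Fin k → X, (∏ j, μ j (x j)) * (condExpPart μ c h x) ^ 2) + η ^ 2 ≤
      ∑ x : Fin k → X, (∏ j, μ j (x j)) *
        (condExpPart μ (fun a => (c a, fun j => decide (a ∈ A j))) h x) ^ 2 := by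
  classical
  constructor
  · simp [Fintype.card_fun, mul_comm]
  set c' : X → Fin m × (Fin k → Bool) := fun a => (c a, fun j => decide (a ∈ A j)) with hc'def
  set w : (Fin k → X) → ℝ := fun x => ∏ j, μ j (x j) with hwdef
  set P : (Fin k → X) → ℝ := condExpPart μ c h with hPdef
  set Q : (Fin k → X) → ℝ := condExpPart μ c' h with hQdef
  set φ : (Fin k → X) → ℝ := fun x => ∏ j, (if x j ∈ A j then (1 : ℝ) else 0) with hφdef
  have hw0 : ∀ x, 0 ≤ w x := fun x => Finset.prod_nonneg fun j _ => hμ0 j (x j)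
  have hwsum : ∑ x : Fin k → X, w x = 1 := by
    rw [hwdef, ← Fintype.prod_sum (f := μ)]
    simp [hμ1]
  -- measurability facts
  have hPmeas : ∀ x y : Fin k → X, (∀ j, c' (x j) = c' (y j)) → P x = P y := by
    intro x y hxy
    exact condExpPart_congr μ c h fun j => congrArg Prod.fst (hxy j)
  have hφmeas : ∀ x y : Fin k → X, (∀ j, c' (x j) = c' (y j)) → φ x = φ y := by
    intro x y hxy
    refine Finset.prod_congr rfl fun j _ => ?_
    have hd : decide (x j ∈ A j) = decide (y j ∈ A j) :=
      congrFun (congrArg Prod.snd (hxy j)) j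
    have : (x j ∈ A j) ↔ (y j ∈ A j) := by
      constructor <;> intro hm
      · exact of_decide_eq_true (hd ▸ decide_eq_true hm)
      · exact of_decide_eq_true (hd.symm ▸ decide_eq_true hm)
    exact if_congr this rfl rfl
  have O1 : ∑ x : Fin k → X, w x * (h x - P x) * P x = 0 :=
    orth μ hμ0 c h P fun x y hxy => condExpPart_congr μ c h hxy
  have O2 : ∑ x : Fin k → X, w x * (h x - Q x) * P x = 0 :=
    orth μ hμ0 c' h P hPmeas
  have O3 : ∑ x : Fin k → X, w x * (h x - Q x) * φ x = 0 :=
    orth μ hμ0 c' h φ hφmeas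
  have cross : ∑ x : Fin k → X, w x * (Q x - P x) * P x = 0 := by
    have e : ∀ x : Fin k → X, w x * (Q x - P x) * P x
        = w x * (h x - P x) * P x - w x * (h x - Q x) * P x := fun x => by ring
    rw [Finset.sum_congr rfl fun x _ => e x, Finset.sum_sub_distrib, O1, O2, sub_zero]
  have scorr : ∑ x : Fin k → X, w x * (Q x - P x) * φ x
      = ∑ x : Fin k → X, w x * (h x - P x) * φ x := by
    have e : ∀ x : Fin k → X, w x * (Q x - P x) * φ x
        = w x * (h x - P x) * φ x - w x * (h x - Q x) * φ x := fun x => by ring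
    rw [Finset.sum_congr rfl fun x _ => e x, Finset.sum_sub_distrib, O3, sub_zero]
  set s : ℝ := ∑ x : Fin k → X, w x * (Q x - P x) * φ x with hsdef
  have hs : η < |s| := by rw [scorr]; exact hcorr
  -- Cauchy-Schwarz
  have hφ01 : ∀ x : Fin k → X, φ x ^ 2 ≤ 1 := by
    intro x
    have h0 : 0 ≤ φ x := Finset.prod_nonneg fun j _ => by split_ifs <;> norm_num
    have h1 : φ x ≤ 1 := Finset.prod_le_one (fun j _ => by split_ifs <;> norm_num)
      (fun j _ => by split_ifs <;> norm_num)
    nlinarith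
  have CS : s ^ 2 ≤ ∑ x : Fin k → X, w x * (Q x - P x) ^ 2 := by
    have key := Finset.sum_mul_sq_le_sq_mul_sq Finset.univ
      (fun x : Fin k → X => Real.sqrt (w x) * (Q x - P x))
      (fun x : Fin k → X => Real.sqrt (w x) * φ x)
    have e1 : ∀ x : Fin k → X, (Real.sqrt (w x) * (Q x - P x)) * (Real.sqrt (w x) * φ x)
        = w x * (Q x - P x) * φ x := by
      intro x
      have hss := Real.mul_self_sqrt (hw0 x)
      calc Real.sqrt (w x) * (Q x - P x) * (Real.sqrt (w x) * φ x)
          = (Real.sqrt (w x) * Real.sqrt (w x)) * ((Q x - P x) * φ x) := by ring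
        _ = w x * (Q x - P x) * φ x := by rw [hss]; ring
    have e2 : ∀ x : Fin k → X, (Real.sqrt (w x) * (Q x - P x)) ^ 2 = w x * (Q x - P x) ^ 2 := by
      intro x; rw [mul_pow, Real.sq_sqrt (hw0 x)]
    have e3 : ∀ x : Fin k → X, (Real.sqrt (w x) * φ x) ^ 2 = w x * φ x ^ 2 := by
      intro x; rw [mul_pow, Real.sq_sqrt (hw0 x)]
    rw [Finset.sum_congr rfl fun x _ => e1 x, Finset.sum_congr rfl fun x _ => e2 x,
      Finset.sum_congr rfl fun x _ => e3 x] at key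
    have hφsum : ∑ x : Fin k → X, w x * φ x ^ 2 ≤ 1 := by
      calc ∑ x : Fin k → X, w x * φ x ^ 2 ≤ ∑ x : Fin k → X, w x :=
            Finset.sum_le_sum fun x _ => by nlinarith [hφ01 x, hw0 x]
        _ = 1 := hwsum
    have hnn : 0 ≤ ∑ x : Fin k → X, w x * (Q x - P x) ^ 2 :=
      Finset.sum_nonneg fun x _ => mul_nonneg (hw0 x) (sq_nonneg _)
    calc s ^ 2 ≤ (∑ x : Fin k → X, w x * (Q x - P x) ^ 2)
          * ∑ x : Fin k → X, w x * φ x ^ 2 := key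
      _ ≤ (∑ x : Fin k → X, w x * (Q x - P x) ^ 2) * 1 :=
          mul_le_mul_of_nonneg_left hφsum hnn
      _ = ∑ x : Fin k → X, w x * (Q x - P x) ^ 2 := mul_one _
  have hη2 : η ^ 2 < s ^ 2 := by nlinarith [sq_abs s, abs_nonneg s]
  -- Pythagoras
  have pyth : ∑ x : Fin k → X, w x * Q x ^ 2
      = (∑ x : Fin k → X, w x * P x ^ 2) + (∑ x : Fin k → X, w x * (Q x - P x) ^ 2)
        + 2 * ∑ x : Fin k → X, w x * (Q x - P x) * P x := by
    rw [← Finset.sum_add_distrib, Finset.mul_sum, ← Finset.sum_add_distrib]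
    exact Finset.sum_congr rfl fun x _ => by ring
  rw [cross] at pyth
  linarith [CS, hη2, pyth]
end

section
/- Let n ∈ ℕ, let μ be a probability measure on [n], and let σ : [0,1] → [0,1] be 1-Lipschitz. Define f : {0,1}^n → [0,1] by f(x) = σ(Σ_{i=1}^n μ(i)x_i). Then for every ε ∈ (0,1) and every integer r ≥ ε^{-2}·log(2/ε), the function f is (r,ε)-holographic, with all r sampling measures equal to μ and with test functions f_s(α₁,…,α_r) = σ((1/r)Σ_{j=1}^r α_j) for every s ∈ [n]^r. -/
open Real Finset

lemma aux_nonneg (f f' : ℝ → ℝ) (hder : ∀ x, HasDerivAt f (f' x) x)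
    (h0 : f 0 = 0) (hf' : ∀ x, 0 ≤ x → 0 ≤ f' x) {x : ℝ} (hx : 0 ≤ x) : 0 ≤ f x := by
  have hmono : MonotoneOn f (Set.Ici 0) := by
    apply monotoneOn_of_deriv_nonneg (convex_Ici (0:ℝ))
    · exact (continuous_iff_continuousAt.2 fun y => (hder y).continuousAt).continuousOn
    · exact fun y _ => (hder y).differentiableAt.differentiableWithinAt
    · intro y hy
      rw [(hder y).deriv]
      exact hf' y (le_of_lt (by simpa using hy))
  have := hmono (Set.self_mem_Ici) hx hx
  linarith [h0 ▸ this]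

lemma exp_neg_le_quad {v : ℝ} (hv : 0 ≤ v) : Real.exp (-v) ≤ 1 - v + v^2/2 := by
  have := aux_nonneg (fun v => 1 - v + v^2/2 - Real.exp (-v))
    (fun v => -1 + v + Real.exp (-v)) ?_ (by norm_num) ?_ hv
  · linarith [this]
  · intro y
    have he : HasDerivAt (fun v:ℝ => Real.exp (-v)) (-Real.exp (-y)) y := by
      simpa [Function.comp_def] using (Real.hasDerivAt_exp (-y)).comp y (hasDerivAt_neg y)
    have hp : HasDerivAt (fun v:ℝ => 1 - v + v^2/2) (-1 + y) y := by
      have h2 : HasDerivAt (fun v:ℝ => v^2) (2*y) y := by simpa using hasDerivAt_pow 2 y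
      have := (((hasDerivAt_const y (1:ℝ)).sub (hasDerivAt_id y)).add (h2.div_const 2))
      refine this.congr_deriv ?_
      ring
    have := hp.sub he
    refine this.congr_deriv ?_
    ring
  · intro y hy
    have := Real.add_one_le_exp (-y)
    linarith

lemma cubic_le_exp_neg {v : ℝ} (hv : 0 ≤ v) : 1 - v + v^2/2 - v^3/6 ≤ Real.exp (-v) := by
  have := aux_nonneg (fun v => Real.exp (-v) - (1 - v + v^2/2 - v^3/6))
    (fun v => -Real.exp (-v) + (1 - v + v^2/2)) ?_ (by norm_num) ?_ hv
  · linarith [this]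
  · intro y
    have he : HasDerivAt (fun v:ℝ => Real.exp (-v)) (-Real.exp (-y)) y := by
      simpa [Function.comp_def] using (Real.hasDerivAt_exp (-y)).comp y (hasDerivAt_neg y)
    have hp : HasDerivAt (fun v:ℝ => 1 - v + v^2/2 - v^3/6) (-1 + y - y^2/2) y := by
      have h2 : HasDerivAt (fun v:ℝ => v^2) (2*y) y := by simpa using hasDerivAt_pow 2 y
      have h3 : HasDerivAt (fun v:ℝ => v^3) (3*y^2) y := by simpa using hasDerivAt_pow 3 y
      have := ((((hasDerivAt_const y (1:ℝ)).sub (hasDerivAt_id y)).add (h2.div_const 2)).sub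
        (h3.div_const 6))
      refine this.congr_deriv ?_
      ring
    have := he.sub hp
    refine this.congr_deriv ?_
    ring
  · intro y hy
    have := exp_neg_le_quad hy
    linarith

lemma exp_le_one_add_add_sq {v : ℝ} (h0 : 0 ≤ v) (h1 : v ≤ 1) :
    Real.exp v ≤ 1 + v + v^2 := by
  have hd : (0:ℝ) < 1 - v + v^2/2 - v^3/6 := by nlinarith
  have hle := cubic_le_exp_neg h0
  have hexp : Real.exp v = (Real.exp (-v))⁻¹ := by
    rw [← Real.exp_neg, neg_neg]
  rw [hexp]
  rw [inv_le_iff_one_le_mul₀ (lt_of_lt_of_le hd hle)]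
  have hfac : (0:ℝ) ≤ v^2*(1-v)*(v^2-v+3) := by
    apply mul_nonneg (mul_nonneg (sq_nonneg v) (by linarith))
    nlinarith [sq_nonneg (v - 1/2)]
  have key : 1 ≤ (1 - v + v^2/2 - v^3/6) * (1 + v + v^2) := by nlinarith [hfac]
  have := mul_le_mul_of_nonneg_right hle (show (0:ℝ) ≤ 1 + v + v^2 by nlinarith)
  linarith

lemma exp_le_poly_two {u : ℝ} (h0 : 0 ≤ u) (h2 : u ≤ 2) :
    Real.exp u ≤ 1 + u + u^2 + u^4/8 := by
  have hv0 : 0 ≤ u/2 := by linarith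
  have hv1 : u/2 ≤ 1 := by linarith
  have h := exp_le_one_add_add_sq hv0 hv1
  have hsq : Real.exp u = (Real.exp (u/2))^2 := by
    rw [← Real.exp_nat_mul]
    congr 1
    push_cast
    ring
  rw [hsq]
  have hpos : (0:ℝ) ≤ Real.exp (u/2) := Real.exp_nonneg _
  calc (Real.exp (u/2))^2 ≤ (1 + u/2 + (u/2)^2)^2 := by
        apply pow_le_pow_left₀ hpos h
    _ ≤ 1 + u + u^2 + u^4/8 := by nlinarith [sq_nonneg (u*(2-u)), sq_nonneg u]

lemma hoeffding_mgf {p θ : ℝ} (hp0 : 0 ≤ p) (hp1 : p ≤ 1) (hθ0 : 0 ≤ θ) (hθ2 : θ ≤ 2) :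
    (1-p) * Real.exp (-(θ*p)) + p * Real.exp (θ*(1-p)) ≤ 1 + θ^2/4 + θ^4/32 := by
  have ha : 0 ≤ θ*p := mul_nonneg hθ0 hp0
  have hb0 : 0 ≤ θ*(1-p) := mul_nonneg hθ0 (by linarith)
  have hb2 : θ*(1-p) ≤ 2 := by nlinarith
  have h1 : Real.exp (-(θ*p)) ≤ 1 - θ*p + (θ*p)^2/2 := exp_neg_le_quad ha
  have h2 : Real.exp (θ*(1-p)) ≤ 1 + θ*(1-p) + (θ*(1-p))^2 + (θ*(1-p))^4/8 :=
    exp_le_poly_two hb0 hb2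
  have hA : (1-p) * Real.exp (-(θ*p)) ≤ (1-p) * (1 - θ*p + (θ*p)^2/2) :=
    mul_le_mul_of_nonneg_left h1 (by linarith)
  have hB : p * Real.exp (θ*(1-p)) ≤ p * (1 + θ*(1-p) + (θ*(1-p))^2 + (θ*(1-p))^4/8) :=
    mul_le_mul_of_nonneg_left h2 hp0
  have key : (1-p) * (1 - θ*p + (θ*p)^2/2) + p * (1 + θ*(1-p) + (θ*(1-p))^2 + (θ*(1-p))^4/8)
      ≤ 1 + θ^2/4 + θ^4/32 := by
    have e2 : p*(1-p)*(p/2 + (1-p)) ≤ 1/4 := by nlinarith [sq_nonneg (p - 1/2), sq_nonneg p, mul_nonneg hp0 (sq_nonneg (1-p))]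
    have e4 : p*(1-p)^4 ≤ 1/4 := by nlinarith [sq_nonneg (p - 1/2), sq_nonneg ((1-p)^2), mul_nonneg hp0 (sq_nonneg (1-p)), sq_nonneg (p*(1-p))]
    nlinarith [sq_nonneg θ, pow_nonneg hθ0 4, mul_le_mul_of_nonneg_left e2 (sq_nonneg θ),
      mul_le_mul_of_nonneg_left e4 (pow_nonneg hθ0 4)]
  linarith

lemma chernoff_core {n : ℕ} (r : ℕ) (μ : Fin n → ℝ) (hμ0 : ∀ i, 0 ≤ μ i)
    (z : Fin n → ℝ) (θ t : ℝ) (hθ : 0 ≤ θ) :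
    ∑ s : Fin r → Fin n, (if t < ∑ j, z (s j) then ∏ j, μ (s j) else 0)
      ≤ Real.exp (-(θ*t)) * (∑ i, μ i * Real.exp (θ * z i)) ^ r := by
  have key : ∀ s : Fin r → Fin n, (if t < ∑ j, z (s j) then ∏ j, μ (s j) else 0)
      ≤ Real.exp (-(θ*t)) * ∏ j, (μ (s j) * Real.exp (θ * z (s j))) := by
    intro s
    have hprod : ∏ j, (μ (s j) * Real.exp (θ * z (s j)))
        = (∏ j, μ (s j)) * Real.exp (θ * ∑ j, z (s j)) := by
      rw [Finset.prod_mul_distrib, ← Real.exp_sum, Finset.mul_sum]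
    have hP0 : 0 ≤ ∏ j, μ (s j) := Finset.prod_nonneg fun j _ => hμ0 _
    split_ifs with h
    · rw [hprod, ← mul_assoc, mul_comm (Real.exp (-(θ*t))), mul_assoc, ← Real.exp_add]
      have h1 : 1 ≤ Real.exp (-(θ*t) + θ * ∑ j, z (s j)) := by
        apply Real.one_le_exp
        nlinarith
      nlinarith
    · exact mul_nonneg (Real.exp_nonneg _)
        (Finset.prod_nonneg fun j _ => mul_nonneg (hμ0 _) (Real.exp_nonneg _))
  calc ∑ s : Fin r → Fin n, (if t < ∑ j, z (s j) then ∏ j, μ (s j) else 0)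
      ≤ ∑ s : Fin r → Fin n, Real.exp (-(θ*t)) * ∏ j, (μ (s j) * Real.exp (θ * z (s j))) :=
        Finset.sum_le_sum fun s _ => key s
    _ = Real.exp (-(θ*t)) * ∑ s : Fin r → Fin n, ∏ j, (μ (s j) * Real.exp (θ * z (s j))) := by
        rw [Finset.mul_sum]
    _ = Real.exp (-(θ*t)) * (∑ i, μ i * Real.exp (θ * z i)) ^ r := by
        rw [Fintype.sum_pow]


set_option maxHeartbeats 1000000 in
/-- Functions of weighted coordinate averages are holographic.
Let `μ` be a discrete probability measure on `[n]` and `σ : [0,1] → [0,1]` be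
`1`-Lipschitz, and let `f(x) = σ(∑ᵢ μ(i)xᵢ)`.  Then for every `ε ∈ (0,1)` and every
integer `r ≥ ε⁻²·log(2/ε)`, `f` is `(r,ε)`-holographic with all `r` sampling measures
equal to `μ` and test functions `f_s(α) = σ((1/r)∑_j α_j)`: for every `x ∈ {0,1}^n`,
`P(|f(x) - σ((1/r)∑_j x_{S_j})| ≤ ε) ≥ 1 - ε` where `S₁,…,S_r` are iid with law `μ`. -/
theorem weighted_average_holographic (n : ℕ)
    (μ : Fin n → ℝ) (hμ0 : ∀ i, 0 ≤ μ i) (hμ1 : ∑ i, μ i = 1)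
    (σ : ℝ → ℝ)
    (hσmap : ∀ t ∈ Set.Icc (0 : ℝ) 1, σ t ∈ Set.Icc (0 : ℝ) 1)
    (hσlip : ∀ s ∈ Set.Icc (0 : ℝ) 1, ∀ t ∈ Set.Icc (0 : ℝ) 1, |σ s - σ t| ≤ |s - t|)
    (f : (Fin n → Bool) → ℝ)
    (hf : ∀ x, f x = σ (∑ i, μ i * (if x i then (1 : ℝ) else 0)))
    (ε : ℝ) (hε0 : 0 < ε) (hε1 : ε < 1)
    (r : ℕ) (hr : ε⁻¹ ^ 2 * Real.log (2 / ε) ≤ (r : ℝ)) :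
    ∀ x : Fin n → Bool,
      1 - ε ≤ ∑ s : Fin r → Fin n,
        (if |f x - σ ((1 / (r : ℝ)) * ∑ j, (if x (s j) then (1 : ℝ) else 0))| ≤ ε
          then ∏ j, μ (s j) else 0) := by
  intro x
  -- basic numeric facts
  have h2ε : (1:ℝ) < 2/ε := by rw [lt_div_iff₀ hε0]; linarith
  have hlog : 0 < Real.log (2/ε) := Real.log_pos h2ε
  have hrpos : 0 < (r:ℝ) := lt_of_lt_of_le (by positivity) hr
  have hrne : (r:ℝ) ≠ 0 := ne_of_gt hrpos
  have hε2 : (0:ℝ) < ε^2 := by positivity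
  have hrε2 : Real.log (2/ε) ≤ (r:ℝ) * ε^2 := by
    rw [inv_pow] at hr
    have := mul_le_mul_of_nonneg_right hr (le_of_lt hε2)
    calc Real.log (2/ε) = (ε^2)⁻¹ * Real.log (2/ε) * ε^2 := by field_simp
      _ ≤ (r:ℝ) * ε^2 := this
  -- the weight q of the true coordinates
  set q : ℝ := ∑ i, (if x i then μ i else 0) with hqdef
  have hq0 : 0 ≤ q := Finset.sum_nonneg fun i _ => by by_cases h : x i <;> simp [h, hμ0 i]
  have hq1 : q ≤ 1 := by
    rw [← hμ1]
    exact Finset.sum_le_sum fun i _ => by by_cases h : x i <;> simp [h, hμ0 i]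
  have hfx : f x = σ q := by
    rw [hf]
    congr 1
    exact Finset.sum_congr rfl fun i _ => by by_cases h : x i <;> simp [h]
  set θ : ℝ := 2*ε with hθdef
  have hθ0 : 0 ≤ θ := by rw [hθdef]; linarith
  have hθ2 : θ ≤ 2 := by rw [hθdef]; linarith
  -- total weight is 1
  have hwsum : ∑ s : Fin r → Fin n, ∏ j, μ (s j) = 1 := by
    rw [← Fintype.sum_pow μ r, hμ1, one_pow]
  have hP0 : ∀ s : Fin r → Fin n, 0 ≤ ∏ j, μ (s j) :=
    fun s => Finset.prod_nonneg fun j _ => hμ0 _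
  -- mgf computations
  have hMup : ∑ i, μ i * Real.exp (θ * ((if x i then (1:ℝ) else 0) - q))
      = q * Real.exp (θ*(1-q)) + (1-q) * Real.exp (-(θ*q)) := by
    have h1 : ∀ i, μ i * Real.exp (θ * ((if x i then (1:ℝ) else 0) - q))
        = (if x i then μ i else 0) * Real.exp (θ*(1-q))
          + (μ i - (if x i then μ i else 0)) * Real.exp (-(θ*q)) := by
      intro i
      by_cases h : x i = true
      · simp only [if_pos h]
        ring
      · simp only [if_neg h]
        rw [show θ * ((0:ℝ) - q) = -(θ*q) by ring]
        ring
    rw [Finset.sum_congr rfl fun i _ => h1 i, Finset.sum_add_distrib, ← Finset.sum_mul,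
      ← Finset.sum_mul, Finset.sum_sub_distrib, hμ1, ← hqdef]
  have hMdn : ∑ i, μ i * Real.exp (θ * (q - (if x i then (1:ℝ) else 0)))
      = q * Real.exp (-(θ*(1-q))) + (1-q) * Real.exp (θ*q) := by
    have h1 : ∀ i, μ i * Real.exp (θ * (q - (if x i then (1:ℝ) else 0)))
        = (if x i then μ i else 0) * Real.exp (-(θ*(1-q)))
          + (μ i - (if x i then μ i else 0)) * Real.exp (θ*q) := by
      intro i
      by_cases h : x i = true
      · simp only [if_pos h]
        rw [show θ * (q - (1:ℝ)) = -(θ*(1-q)) by ring]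
        ring
      · simp only [if_neg h]
        rw [show θ * (q - (0:ℝ)) = θ*q by ring]
        ring
    rw [Finset.sum_congr rfl fun i _ => h1 i, Finset.sum_add_distrib, ← Finset.sum_mul,
      ← Finset.sum_mul, Finset.sum_sub_distrib, hμ1, ← hqdef]
  have hmgf_exp : 1 + θ^2/4 + θ^4/32 ≤ Real.exp (ε^2) := by
    have h := Real.quadratic_le_exp_of_nonneg (x := ε^2) (le_of_lt hε2)
    rw [hθdef]
    nlinarith [h]
  have hMup_le : ∑ i, μ i * Real.exp (θ * ((if x i then (1:ℝ) else 0) - q)) ≤ Real.exp (ε^2) := by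
    rw [hMup]
    have := hoeffding_mgf hq0 hq1 hθ0 hθ2
    linarith
  have hMdn_le : ∑ i, μ i * Real.exp (θ * (q - (if x i then (1:ℝ) else 0))) ≤ Real.exp (ε^2) := by
    rw [hMdn]
    have h := hoeffding_mgf (p := 1-q) (by linarith) (by linarith) hθ0 hθ2
    rw [show θ*(1-(1-q)) = θ*q by ring, show (1:ℝ)-(1-q) = q by ring] at h
    linarith
  -- tail bound
  have htail : ∀ M : ℝ, 0 ≤ M → M ≤ Real.exp (ε^2) →
      Real.exp (-(θ*((r:ℝ)*ε))) * M^r ≤ ε/2 := by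
    intro M hM0 hM
    have h1 : M^r ≤ Real.exp (ε^2) ^ r := pow_le_pow_left₀ hM0 hM r
    have h2 : Real.exp (ε^2) ^ r = Real.exp ((r:ℝ)*ε^2) := by
      rw [← Real.exp_nat_mul]
    have h3 : Real.exp (-(θ*((r:ℝ)*ε))) * Real.exp ((r:ℝ)*ε^2)
        = Real.exp ((r:ℝ)*ε^2 - θ*((r:ℝ)*ε)) := by
      rw [← Real.exp_add]
      ring_nf
    have h4 : (r:ℝ)*ε^2 - θ*((r:ℝ)*ε) ≤ Real.log (ε/2) := by
      have hlog2 : Real.log (ε/2) = -Real.log (2/ε) := by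
        rw [show (ε/2) = (2/ε)⁻¹ by field_simp, Real.log_inv]
      rw [hθdef, hlog2]
      nlinarith [hrε2]
    calc Real.exp (-(θ*((r:ℝ)*ε))) * M^r
        ≤ Real.exp (-(θ*((r:ℝ)*ε))) * Real.exp ((r:ℝ)*ε^2) := by
          apply mul_le_mul_of_nonneg_left (h1.trans (le_of_eq h2)) (Real.exp_nonneg _)
      _ = Real.exp ((r:ℝ)*ε^2 - θ*((r:ℝ)*ε)) := h3
      _ ≤ Real.exp (Real.log (ε/2)) := Real.exp_le_exp.mpr h4
      _ = ε/2 := Real.exp_log (by positivity)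
  -- Chernoff applications
  have hup : ∑ s : Fin r → Fin n,
      (if (r:ℝ)*ε < ∑ j, ((if x (s j) then (1:ℝ) else 0) - q) then ∏ j, μ (s j) else 0) ≤ ε/2 := by
    have hc := chernoff_core r μ hμ0 (fun i => (if x i then (1:ℝ) else 0) - q) θ ((r:ℝ)*ε) hθ0
    exact le_trans hc (htail _ (Finset.sum_nonneg fun i _ =>
      mul_nonneg (hμ0 i) (Real.exp_nonneg _)) hMup_le)
  have hdn : ∑ s : Fin r → Fin n,
      (if (r:ℝ)*ε < ∑ j, (q - (if x (s j) then (1:ℝ) else 0)) then ∏ j, μ (s j) else 0) ≤ ε/2 := by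
    have hc := chernoff_core r μ hμ0 (fun i => q - (if x i then (1:ℝ) else 0)) θ ((r:ℝ)*ε) hθ0
    exact le_trans hc (htail _ (Finset.sum_nonneg fun i _ =>
      mul_nonneg (hμ0 i) (Real.exp_nonneg _)) hMdn_le)
  -- bad set decomposition
  have hbad : ∑ s : Fin r → Fin n,
      (if ¬ (|q - (1/(r:ℝ)) * ∑ j, (if x (s j) then (1:ℝ) else 0)| ≤ ε) then ∏ j, μ (s j) else 0)
      ≤ ε := by
    have hpt : ∀ s : Fin r → Fin n,
        (if ¬ (|q - (1/(r:ℝ)) * ∑ j, (if x (s j) then (1:ℝ) else 0)| ≤ ε) then ∏ j, μ (s j) else 0)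
        ≤ (if (r:ℝ)*ε < ∑ j, ((if x (s j) then (1:ℝ) else 0) - q) then ∏ j, μ (s j) else 0)
          + (if (r:ℝ)*ε < ∑ j, (q - (if x (s j) then (1:ℝ) else 0)) then ∏ j, μ (s j) else 0) := by
      intro s
      by_cases hA : |q - (1/(r:ℝ)) * ∑ j, (if x (s j) then (1:ℝ) else 0)| ≤ ε
      · rw [if_neg (by simpa using hA)]
        apply add_nonneg <;> (split_ifs <;> simp [hP0 s])
      · rw [if_pos (by simpa using hA)]
        set S : ℝ := ∑ j, (if x (s j) then (1:ℝ) else 0) with hSdef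
        have hsum1 : ∑ j : Fin r, ((if x (s j) then (1:ℝ) else 0) - q) = S - (r:ℝ)*q := by
          rw [Finset.sum_sub_distrib, Finset.sum_const, Finset.card_univ, Fintype.card_fin,
            nsmul_eq_mul, ← hSdef]
        have hsum2 : ∑ j : Fin r, (q - (if x (s j) then (1:ℝ) else 0)) = (r:ℝ)*q - S := by
          rw [Finset.sum_sub_distrib, Finset.sum_const, Finset.card_univ, Fintype.card_fin,
            nsmul_eq_mul, ← hSdef]
        have hrm : (r:ℝ) * ((1/(r:ℝ)) * S) = S := by field_simp
        rw [not_le, lt_abs] at hA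
        rcases hA with h | h
        · -- q - m > ε : lower tail
          have h2 : (r:ℝ)*ε < (r:ℝ)*(q - (1/(r:ℝ)) * S) := by
            exact mul_lt_mul_of_pos_left h hrpos
          have h3 : (r:ℝ)*ε < ∑ j : Fin r, (q - (if x (s j) then (1:ℝ) else 0)) := by
            rw [hsum2]
            nlinarith [hrm]
          rw [if_pos h3]
          have : (0:ℝ) ≤ (if (r:ℝ)*ε < ∑ j : Fin r, ((if x (s j) then (1:ℝ) else 0) - q)
              then ∏ j, μ (s j) else 0) := by split_ifs <;> simp [hP0 s]
          linarith
        · -- m - q > ε : upper tail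
          have h2 : (r:ℝ)*ε < (r:ℝ)*(-(q - (1/(r:ℝ)) * S)) := by
            exact mul_lt_mul_of_pos_left h hrpos
          have h3 : (r:ℝ)*ε < ∑ j : Fin r, ((if x (s j) then (1:ℝ) else 0) - q) := by
            rw [hsum1]
            nlinarith [hrm]
          rw [if_pos h3]
          have : (0:ℝ) ≤ (if (r:ℝ)*ε < ∑ j : Fin r, (q - (if x (s j) then (1:ℝ) else 0))
              then ∏ j, μ (s j) else 0) := by split_ifs <;> simp [hP0 s]
          linarith
    have hsum := Finset.sum_le_sum fun s (_ : s ∈ Finset.univ) => hpt s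
    rw [Finset.sum_add_distrib] at hsum
    linarith
  -- good set lower bound
  have hgood : 1 - ε ≤ ∑ s : Fin r → Fin n,
      (if |q - (1/(r:ℝ)) * ∑ j, (if x (s j) then (1:ℝ) else 0)| ≤ ε then ∏ j, μ (s j) else 0) := by
    have hsplit : ∀ s : Fin r → Fin n,
        (if |q - (1/(r:ℝ)) * ∑ j, (if x (s j) then (1:ℝ) else 0)| ≤ ε then ∏ j, μ (s j) else 0)
        = ∏ j, μ (s j)
          - (if ¬ (|q - (1/(r:ℝ)) * ∑ j, (if x (s j) then (1:ℝ) else 0)| ≤ ε)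
              then ∏ j, μ (s j) else 0) := by
      intro s
      by_cases h : |q - (1/(r:ℝ)) * ∑ j, (if x (s j) then (1:ℝ) else 0)| ≤ ε
      · rw [if_pos h, if_neg (not_not_intro h), sub_zero]
      · rw [if_neg h, if_pos h]
        ring
    rw [Finset.sum_congr rfl fun s _ => hsplit s, Finset.sum_sub_distrib, hwsum]
    linarith
  -- transfer from |q - m| ≤ ε to the σ condition using the Lipschitz property
  refine le_trans hgood (Finset.sum_le_sum fun s _ => ?_)
  by_cases hA : |q - (1/(r:ℝ)) * ∑ j, (if x (s j) then (1:ℝ) else 0)| ≤ ε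
  · rw [if_pos hA]
    have hm01 : (1/(r:ℝ)) * ∑ j, (if x (s j) then (1:ℝ) else 0) ∈ Set.Icc (0:ℝ) 1 := by
      constructor
      · apply mul_nonneg (by positivity)
        exact Finset.sum_nonneg fun j _ => by split_ifs <;> norm_num
      · have hS1 : ∑ j : Fin r, (if x (s j) then (1:ℝ) else 0) ≤ (r:ℝ) := by
          calc ∑ j : Fin r, (if x (s j) then (1:ℝ) else 0) ≤ ∑ _j : Fin r, (1:ℝ) :=
              Finset.sum_le_sum fun j _ => by split_ifs <;> norm_num
            _ = (r:ℝ) := by simp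
        have := mul_le_mul_of_nonneg_left hS1 (show (0:ℝ) ≤ 1/(r:ℝ) by positivity)
        calc (1/(r:ℝ)) * ∑ j, (if x (s j) then (1:ℝ) else 0) ≤ (1/(r:ℝ)) * (r:ℝ) := this
          _ = 1 := by field_simp
    have hcond : |f x - σ ((1/(r:ℝ)) * ∑ j, (if x (s j) then (1:ℝ) else 0))| ≤ ε := by
      rw [hfx]
      calc |σ q - σ ((1/(r:ℝ)) * ∑ j, (if x (s j) then (1:ℝ) else 0))|
          ≤ |q - (1/(r:ℝ)) * ∑ j, (if x (s j) then (1:ℝ) else 0)| :=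
            hσlip q ⟨hq0, hq1⟩ _ hm01
        _ ≤ ε := hA
    rw [if_pos hcond]
  · rw [if_neg hA]
    split_ifs <;> simp [hP0 s]
end

section
/- For every k ∈ ℕ and every ε ∈ (0, 1/4), there exists n₀ ∈ ℕ such that for all n ≥ n₀, the parity function f : {0,1}^n → [0,1] defined by f(x) = (x₁ + ⋯ + x_n) mod 2 is not (k,ε)-holographic. One may take any n₀ > k/(1 − 4ε). -/
/-- The parity function `x ↦ (x₁ + ⋯ + x_n) mod 2`, viewed as taking values in
`{0,1} ⊆ [0,1]`. -/
def parity (n : ℕ) (x : Fin n → Bool) : ℝ :=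
  (((∑ i, (if x i then 1 else 0 : ℕ)) % 2 : ℕ) : ℝ)

set_option maxHeartbeats 1000000 in
/-- Parity is not holographic.
For every `k ∈ ℕ` and `ε ∈ (0, 1/4)`, for every `n` with `n > k/(1-4ε)` (so that one may
take any `n₀ > k/(1-4ε)` and all `n ≥ n₀`), the parity function on `{0,1}^n` is not
`(k,ε)`-holographic. -/
theorem parity_not_holographic (k : ℕ) (ε : ℝ) (hε0 : 0 < ε) (hε1 : ε < 1 / 4)
    (n : ℕ) (hn : (k : ℝ) / (1 - 4 * ε) < (n : ℝ)) :
    ¬ Holographic n k ε (parity n) := by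
  have h4 : (0:ℝ) < 1 - 4 * ε := by linarith
  have hkn : (k : ℝ) < n * (1 - 4 * ε) := by
    rw [div_lt_iff₀ h4] at hn; linarith
  rintro ⟨μ, ft, hμ0, hμ1, hft, hG⟩
  have hw0 : ∀ s : Fin k → Fin n, 0 ≤ ∏ j, μ j (s j) :=
    fun s => Finset.prod_nonneg fun j _ => hμ0 _ _
  have hprodsum : ∀ g : Fin k → Fin n → ℝ,
      ∑ s : Fin k → Fin n, ∏ j, g j (s j) = ∏ j, ∑ i, g j i := by
    intro g
    rw [Finset.prod_univ_sum]
    simp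
  have hwsum : ∑ s : Fin k → Fin n, ∏ j, μ j (s j) = 1 := by
    rw [hprodsum]; simp [hμ1]
  have hfiber : ∀ (j : Fin k) (i : Fin n),
      ∑ s : Fin k → Fin n, (if s j = i then ∏ j', μ j' (s j') else 0) = μ j i := by
    intro j i
    calc ∑ s : Fin k → Fin n, (if s j = i then ∏ j', μ j' (s j') else 0)
        = ∑ s : Fin k → Fin n, ∏ j', (if j' = j then (if s j' = i then μ j' (s j') else 0)
            else μ j' (s j')) := by
          apply Finset.sum_congr rfl; intro s _
          by_cases h : s j = i
          · rw [if_pos h]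
            refine (Finset.prod_congr rfl ?_).symm
            intro j' _
            by_cases hj : j' = j
            · subst hj; simp [h]
            · simp [hj]
          · rw [if_neg h]
            exact (Finset.prod_eq_zero (Finset.mem_univ j) (by simp [h])).symm
      _ = ∏ j', ∑ i', (if j' = j then (if i' = i then μ j' i' else 0) else μ j' i') :=
          hprodsum (fun j' i' => if j' = j then (if i' = i then μ j' i' else 0) else μ j' i')
      _ = μ j i := by
          have hterm : ∀ j' : Fin k,
              (∑ i', if j' = j then (if i' = i then μ j' i' else 0) else μ j' i')
                = if j' = j then μ j i else 1 := by
            intro j'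
            by_cases hj : j' = j
            · subst hj; simp
            · simp [hj, hμ1]
          rw [Finset.prod_congr rfl (fun j' _ => hterm j')]
          simp
  have hpar0 : parity n (fun _ => false) = 0 := by simp [parity]
  have hpar1 : ∀ i : Fin n, parity n (Function.update (fun _ => false) i true) = 1 := by
    intro i
    unfold parity
    have : (∑ i', (if Function.update (fun _ => false) i true i' then 1 else 0 : ℕ)) = 1 := by
      rw [Finset.sum_eq_single i]
      · simp
      · intro b _ hb; simp [Function.update_of_ne hb]
      · simp
    rw [this]
    norm_num
  have hkey : ∀ i : Fin n, 1 - 2 * ε ≤ ∑ j, μ j i := by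
    intro i
    set x : Fin n → Bool := fun _ => false with hx
    set y : Fin n → Bool := Function.update x i true with hy
    have h1 := hG x
    have h2 := hG y
    have hbound : ∀ s : Fin k → Fin n,
        (if |parity n x - ft s (fun j => x (s j))| ≤ ε then ∏ j, μ j (s j) else 0)
        + (if |parity n y - ft s (fun j => y (s j))| ≤ ε then ∏ j, μ j (s j) else 0)
        ≤ ∏ j, μ j (s j) + (if ∃ j, s j = i then ∏ j, μ j (s j) else 0) := by
      intro s
      by_cases hhit : ∃ j, s j = i
      · rw [if_pos hhit]
        have := hw0 s
        split <;> split <;> linarith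
      · rw [if_neg hhit]
        push_neg at hhit
        have hxy : (fun j => x (s j)) = (fun j => y (s j)) := by
          funext j
          simp [hy, Function.update_of_ne (hhit j)]
        by_cases hA : |parity n x - ft s (fun j => x (s j))| ≤ ε
        · rw [if_pos hA]
          have hB : ¬ |parity n y - ft s (fun j => y (s j))| ≤ ε := by
            rw [← hxy, hpar1 i]
            rw [hpar0] at hA
            rw [abs_le] at hA ⊢
            intro hB
            linarith [hA.1, hA.2, hB.1, hB.2]
          rw [if_neg hB]
        · rw [if_neg hA]
          split <;> linarith [hw0 s]
    have hsum := Finset.sum_le_sum fun s (_ : s ∈ Finset.univ) => hbound s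
    rw [Finset.sum_add_distrib, Finset.sum_add_distrib, hwsum] at hsum
    have hhitle : ∑ s : Fin k → Fin n, (if ∃ j, s j = i then ∏ j, μ j (s j) else 0)
        ≤ ∑ j, μ j i := by
      calc ∑ s : Fin k → Fin n, (if ∃ j, s j = i then ∏ j', μ j' (s j') else 0)
          ≤ ∑ s : Fin k → Fin n, ∑ j, (if s j = i then ∏ j', μ j' (s j') else 0) := by
            apply Finset.sum_le_sum; intro s _
            by_cases h : ∃ j, s j = i
            · rw [if_pos h]
              obtain ⟨j, hj⟩ := h
              calc ∏ j', μ j' (s j')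
                  = (if s j = i then ∏ j', μ j' (s j') else 0) := by rw [if_pos hj]
                _ ≤ ∑ j, (if s j = i then ∏ j', μ j' (s j') else 0) :=
                    Finset.single_le_sum
                      (f := fun j => if s j = i then ∏ j', μ j' (s j') else 0)
                      (fun j _ => by skip
                                     split
                                     · exact hw0 s
                                     · exact le_rfl) (Finset.mem_univ j)
            · rw [if_neg h]
              refine Finset.sum_nonneg fun j _ => ?_
              split
              · exact hw0 s
              · exact le_rfl
        _ = ∑ j, ∑ s : Fin k → Fin n, (if s j = i then ∏ j', μ j' (s j') else 0) :=
            Finset.sum_comm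
        _ = ∑ j, μ j i := by
            exact Finset.sum_congr rfl fun j _ => hfiber j i
    linarith
  have hfinal : (n : ℝ) * (1 - 2 * ε) ≤ k := by
    calc (n : ℝ) * (1 - 2 * ε) = ∑ _i : Fin n, (1 - 2 * ε) := by
          simp [mul_comm]; ring
      _ ≤ ∑ i, ∑ j, μ j i := Finset.sum_le_sum fun i _ => hkey i
      _ = ∑ j, ∑ i, μ j i := Finset.sum_comm
      _ = k := by simp [hμ1]
  nlinarith [mul_nonneg (Nat.cast_nonneg n : (0:ℝ) ≤ n) hε0.le]
end

section
/- Let k ∈ ℕ and 0 < ε < 1, and put α = ε²/4 and η = ε²/2. Suppose f : {0,1}^n → [0,1] is (k,α)-holographic (with possibly distinct sampling measures μ₁,…,μ_k). Then for every integer r satisfying k·e^{−r/k} ≤ η, the function f is identically sampled (r,ε)-holographic; in particular, it is enough to take r ≥ k·log(2k/ε²). The single common sampling measure may be taken to be μ = (1/k)Σ_{i=1}^k μ_i. -/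
open Finset

private lemma sum_prod_fn {n r : ℕ} (A : Fin r → Fin n → ℝ) :
    ∑ c : Fin r → Fin n, ∏ j, A j (c j) = ∏ j, ∑ i, A j i := by
  rw [Finset.prod_univ_sum, Fintype.piFinset_univ]

private lemma marginalize {n r k : ℕ} (ρ : Fin r → Fin n → ℝ) (hρ1 : ∀ j, ∑ i, ρ j i = 1)
    (σ : Fin k → Fin r) (hσ : Function.Injective σ) (F : (Fin k → Fin n) → ℝ) :
    ∑ s : Fin r → Fin n, (∏ j, ρ j (s j)) * F (fun i => s (σ i))
      = ∑ t : Fin k → Fin n, (∏ i, ρ (σ i) (t i)) * F t := by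
  classical
  set p : Fin r → Prop := fun j => ∃ i, σ i = j with hp
  let e0 : Fin k ≃ {x // p x} := Equiv.ofBijective (fun i => ⟨σ i, i, rfl⟩)
    ⟨fun a b h => hσ (congrArg Subtype.val h),
     fun j => ⟨j.2.choose, Subtype.ext j.2.choose_spec⟩⟩
  let E : ((Fin k → Fin n) × ({j // ¬ p j} → Fin n)) ≃ (Fin r → Fin n) :=
    ((Equiv.arrowCongr e0 (Equiv.refl (Fin n))).prodCongr (Equiv.refl _)).trans
      (Equiv.piEquivPiSubtypeProd p (fun _ => Fin n)).symm
  have hE : ∀ t v j, E (t, v) j = if h : p j then t (e0.symm ⟨j, h⟩) else v ⟨j, h⟩ := by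
    intro t v j
    simp [E, Equiv.piEquivPiSubtypeProd_symm_apply, Equiv.arrowCongr]
  have hEσ : ∀ t v i, E (t, v) (σ i) = t i := by
    intro t v i
    have hpi : p (σ i) := ⟨i, rfl⟩
    rw [hE, dif_pos hpi]
    congr 1
    have h : e0 i = ⟨σ i, hpi⟩ := rfl
    rw [← h, Equiv.symm_apply_apply]
  rw [← Equiv.sum_comp E, Fintype.sum_prod_type]
  have hterm : ∀ t v, (∏ j, ρ j (E (t, v) j)) * F (fun i => E (t, v) (σ i))
      = ((∏ i, ρ (σ i) (t i)) * F t) * ∏ j : {x // ¬ p x}, ρ j.1 (v j) := by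
    intro t v
    have h1 : (∏ j, ρ j (E (t, v) j))
        = (∏ j : {x // p x}, ρ j.1 (E (t,v) j.1)) * ∏ j : {x // ¬ p x}, ρ j.1 (E (t,v) j.1) :=
      (Fintype.prod_subtype_mul_prod_subtype p _).symm
    have h2 : (∏ j : {x // p x}, ρ j.1 (E (t,v) j.1)) = ∏ i, ρ (σ i) (t i) := by
      rw [← Equiv.prod_comp e0]
      refine Finset.prod_congr rfl fun i _ => ?_
      have h : (e0 i : Fin r) = σ i := rfl
      simp only [h, hEσ]
    have h3 : (∏ j : {x // ¬ p x}, ρ j.1 (E (t,v) j.1)) = ∏ j : {x // ¬ p x}, ρ j.1 (v j) :=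
      Finset.prod_congr rfl fun j _ => by rw [hE, dif_neg j.2]
    have h4 : (fun i => E (t,v) (σ i)) = t := funext fun i => hEσ t v i
    rw [h1, h2, h3, h4]; ring
  calc ∑ t, ∑ v, (∏ j, ρ j (E (t, v) j)) * F (fun i => E (t, v) (σ i))
      = ∑ t, ∑ v : {j // ¬ p j} → Fin n,
          ((∏ i, ρ (σ i) (t i)) * F t) * ∏ j : {x // ¬ p x}, ρ j.1 (v j) :=
        Finset.sum_congr rfl fun t _ => Finset.sum_congr rfl fun v _ => hterm t v
    _ = ∑ t : Fin k → Fin n, (∏ i, ρ (σ i) (t i)) * F t := by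
        refine Finset.sum_congr rfl fun t _ => ?_
        rw [← Finset.mul_sum]
        have h0 : ∑ v : {j // ¬ p j} → Fin n, ∏ j : {x // ¬ p x}, ρ j.1 (v j)
            = ∏ j : {x // ¬ p x}, ∑ i, ρ j.1 i := by
          rw [Finset.prod_univ_sum, Fintype.piFinset_univ]
        have h5 : (∏ j : {x // ¬ p x}, ∑ i, ρ j.1 i) = 1 :=
          Finset.prod_eq_one fun j _ => hρ1 j.1
        rw [h0, h5, mul_one]

private lemma count_nonsurj (k r : ℕ) :
    ∑ c : Fin r → Fin k, (if Function.Surjective c then (0:ℝ) else 1)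
      ≤ (k:ℝ) * ((k:ℝ) - 1) ^ r := by
  classical
  have hstep : ∀ c : Fin r → Fin k, (if Function.Surjective c then (0:ℝ) else 1)
      ≤ ∑ i : Fin k, ∏ j, (if c j = i then (0:ℝ) else 1) := by
    intro c
    by_cases hc : Function.Surjective c
    · rw [if_pos hc]
      exact Finset.sum_nonneg fun i _ => Finset.prod_nonneg fun j _ => by positivity
    · rw [if_neg hc]
      obtain ⟨i, hi⟩ := not_forall.mp hc
      have h1 : (∏ j, (if c j = i then (0:ℝ) else 1)) = 1 :=
        Finset.prod_eq_one fun j _ => if_neg (fun h => hi ⟨j, h⟩)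
      calc (1:ℝ) = ∏ j, (if c j = i then (0:ℝ) else 1) := h1.symm
        _ ≤ ∑ i' : Fin k, ∏ j, (if c j = i' then (0:ℝ) else 1) :=
          Finset.single_le_sum (f := fun i' : Fin k => ∏ j, (if c j = i' then (0:ℝ) else 1))
            (fun i' _ => Finset.prod_nonneg fun j _ => by positivity) (Finset.mem_univ i)
  calc ∑ c : Fin r → Fin k, (if Function.Surjective c then (0:ℝ) else 1)
      ≤ ∑ c : Fin r → Fin k, ∑ i : Fin k, ∏ j, (if c j = i then (0:ℝ) else 1) :=
        Finset.sum_le_sum fun c _ => hstep c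
    _ = ∑ i : Fin k, ∑ c : Fin r → Fin k, ∏ j, (if c j = i then (0:ℝ) else 1) :=
        Finset.sum_comm
    _ = ∑ i : Fin k, ∏ j : Fin r, ∑ m : Fin k, (if m = i then (0:ℝ) else 1) := by
        refine Finset.sum_congr rfl fun i _ => ?_
        rw [Finset.prod_univ_sum, Fintype.piFinset_univ]
    _ = ∑ i : Fin k, ∏ j : Fin r, ((k:ℝ) - 1) := by
        refine Finset.sum_congr rfl fun i _ => Finset.prod_congr rfl fun j _ => ?_
        have h : ∀ m : Fin k, (if m = i then (0:ℝ) else 1) = 1 - (if m = i then (1:ℝ) else 0) := by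
          intro m; split <;> ring
        simp only [h]
        rw [Finset.sum_sub_distrib, Finset.sum_ite_eq' Finset.univ i (fun _ => (1:ℝ))]
        simp [Finset.card_univ]
    _ = (k:ℝ) * ((k:ℝ) - 1) ^ r := by simp [Finset.card_univ, mul_comm]

/-- Identical versus non-identical sampling.
Let `k ≥ 1`, `0 < ε < 1`, `α = ε²/4`, `η = ε²/2`.  Suppose `f : {0,1}^n → [0,1]` is
`(k,α)`-holographic with (possibly distinct) sampling measures `μ₁,…,μ_k` and test
functions `ft`.  Then:
(1) every integer `r ≥ k·log(2k/ε²)` satisfies `k·e^{-r/k} ≤ η`; and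
(2) for every integer `r` with `k·e^{-r/k} ≤ η`, the function `f` is identically sampled
`(r,ε)`-holographic, with the single common sampling measure `μ = (1/k)∑ᵢ μᵢ`: there are
test functions `g_s : {0,1}^r → [0,1]` such that for every `x`,
`P(|f(x) - g_S(x_S)| ≤ ε) ≥ 1 - ε` where `S₁,…,S_r` are iid with law `μ`. -/
theorem identical_sampling (n k : ℕ) (hk : 1 ≤ k) (ε : ℝ) (hε0 : 0 < ε) (hε1 : ε < 1)
    (f : (Fin n → Bool) → ℝ) (hf : ∀ x, f x ∈ Set.Icc (0 : ℝ) 1)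
    (μ : Fin k → Fin n → ℝ)
    (hμ0 : ∀ j i, 0 ≤ μ j i) (hμ1 : ∀ j, ∑ i, μ j i = 1)
    (ft : (Fin k → Fin n) → (Fin k → Bool) → ℝ)
    (hft : ∀ s a, ft s a ∈ Set.Icc (0 : ℝ) 1)
    (hholo : ∀ x : Fin n → Bool,
      1 - ε ^ 2 / 4 ≤ ∑ s : Fin k → Fin n,
        (if |f x - ft s (fun j => x (s j))| ≤ ε ^ 2 / 4 then ∏ j, μ j (s j) else 0)) :
    (∀ r : ℕ, (k : ℝ) * Real.log (2 * k / ε ^ 2) ≤ (r : ℝ) →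
      (k : ℝ) * Real.exp (-(r : ℝ) / k) ≤ ε ^ 2 / 2) ∧
    ∀ r : ℕ, (k : ℝ) * Real.exp (-(r : ℝ) / k) ≤ ε ^ 2 / 2 →
      ∃ g : (Fin r → Fin n) → (Fin r → Bool) → ℝ,
        (∀ s a, g s a ∈ Set.Icc (0 : ℝ) 1) ∧
        ∀ x : Fin n → Bool,
          1 - ε ≤ ∑ s : Fin r → Fin n,
            (if |f x - g s (fun j => x (s j))| ≤ ε
              then ∏ j, (1 / (k : ℝ)) * ∑ i, μ i (s j) else 0) := by
  classical
  have hk0 : (0:ℝ) < k := by exact_mod_cast hk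
  have hk1 : (1:ℝ) ≤ k := by exact_mod_cast hk
  constructor
  · intro r hr
    have ht : (0:ℝ) < 2 * k / ε ^ 2 := by positivity
    have h1 : Real.log (2 * k / ε ^ 2) ≤ (r:ℝ) / k := (le_div_iff₀ hk0).mpr (by linarith)
    have h2 : Real.exp (-(r:ℝ) / k) ≤ ε ^ 2 / (2 * k) := by
      have h3 : Real.exp (-((r:ℝ) / k)) ≤ Real.exp (-Real.log (2 * k / ε ^ 2)) :=
        Real.exp_le_exp.mpr (neg_le_neg h1)
      rw [Real.exp_neg (Real.log _), Real.exp_log ht] at h3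
      rw [neg_div]
      calc Real.exp (-((r:ℝ)/k)) ≤ (2 * k / ε ^ 2)⁻¹ := h3
        _ = ε ^ 2 / (2 * k) := by field_simp
    calc (k:ℝ) * Real.exp (-(r:ℝ)/k) ≤ k * (ε ^ 2 / (2 * k)) := by nlinarith
      _ = ε ^ 2 / 2 := by field_simp
  · intro r hr
    have hε2 : ε ^ 2 < 1 := by nlinarith
    have hr0 : 0 < r := by
      by_contra h
      push_neg at h
      have : r = 0 := Nat.le_zero.mp h
      subst this
      simp only [Nat.cast_zero, neg_zero, zero_div, Real.exp_zero, mul_one] at hr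
      nlinarith
    set σ : (Fin r → Fin k) → Fin k → Fin r := fun c =>
      if h : Function.Surjective c then Function.surjInv h else fun _ => ⟨0, hr0⟩ with hσdef
    have hσ_eq : ∀ c (h : Function.Surjective c) (i : Fin k), c (σ c i) = i := by
      intro c h i
      simp only [hσdef, dif_pos h]
      exact Function.surjInv_eq h i
    have hσ_inj : ∀ c, Function.Surjective c → Function.Injective (σ c) := by
      intro c h a b hab
      have h2 := congrArg c hab
      rwa [hσ_eq c h, hσ_eq c h] at h2
    set W : (Fin r → Fin k) → (Fin r → Fin n) → ℝ := fun c s => ∏ j, μ (c j) (s j) with hWdef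
    have hW0 : ∀ c s, 0 ≤ W c s := fun c s => Finset.prod_nonneg fun j _ => hμ0 _ _
    have hWsum : ∀ c, ∑ s : Fin r → Fin n, W c s = 1 := by
      intro c
      rw [hWdef]
      rw [sum_prod_fn (fun j i => μ (c j) i)]
      exact Finset.prod_eq_one fun j _ => hμ1 (c j)
    set T : (Fin r → Fin n) → ℝ := fun s => ∑ c, W c s with hTdef
    have hT0 : ∀ s, 0 ≤ T s := fun s => Finset.sum_nonneg fun c _ => hW0 c s
    set g : (Fin r → Fin n) → (Fin r → Bool) → ℝ := fun s a =>
      (∑ c, W c s * ft (fun i => s (σ c i)) (fun i => a (σ c i))) / T s with hgdef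
    have hnum0 : ∀ (s : Fin r → Fin n) (a : Fin r → Bool), 0 ≤ ∑ c, W c s * ft (fun i => s (σ c i)) (fun i => a (σ c i)) :=
      fun s a => Finset.sum_nonneg fun c _ => mul_nonneg (hW0 c s) (hft _ _).1
    have hnumT : ∀ (s : Fin r → Fin n) (a : Fin r → Bool), (∑ c, W c s * ft (fun i => s (σ c i)) (fun i => a (σ c i))) ≤ T s := by
      intro s a
      rw [hTdef]
      exact Finset.sum_le_sum fun c _ => mul_le_of_le_one_right (hW0 c s) (hft _ _).2
    refine ⟨g, ?_, ?_⟩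
    · intro s a
      constructor
      · exact div_nonneg (hnum0 s a) (hT0 s)
      · by_cases hT : T s = 0
        · simp only [hgdef, hT, div_zero]; norm_num
        · rw [hgdef]
          rw [div_le_one (lt_of_le_of_ne (hT0 s) (Ne.symm hT))]
          exact hnumT s a
    · intro x
      set D : (Fin r → Fin n) → ℝ := fun s =>
        ∑ c, W c s * |f x - ft (fun i => s (σ c i)) (fun i => x (s (σ c i)))| with hDdef
      have hD0 : ∀ s, 0 ≤ D s :=
        fun s => Finset.sum_nonneg fun c _ => mul_nonneg (hW0 c s) (abs_nonneg _)
      -- Claim 1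
      have hclaim1 : ∀ s : Fin r → Fin n, |f x - g s (fun j => x (s j))| * T s ≤ D s := by
        intro s
        by_cases hT : T s = 0
        · rw [hT, mul_zero]; exact hD0 s
        · have hTpos : 0 < T s := lt_of_le_of_ne (hT0 s) (Ne.symm hT)
          have e1 : ∑ c, W c s * (f x - ft (fun i => s (σ c i)) (fun i => x (s (σ c i))))
              = T s * f x
                - ∑ c, W c s * ft (fun i => s (σ c i)) (fun i => x (s (σ c i))) := by
            simp only [mul_sub]
            rw [Finset.sum_sub_distrib, ← Finset.sum_mul]
          have e2 : f x - g s (fun j => x (s j))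
              = (∑ c, W c s * (f x - ft (fun i => s (σ c i)) (fun i => x (s (σ c i))))) / T s := by
            rw [e1]
            simp only [hgdef]
            field_simp
          rw [e2, abs_div, abs_of_pos hTpos, div_mul_cancel₀ _ hT]
          calc |∑ c, W c s * (f x - ft (fun i => s (σ c i)) (fun i => x (s (σ c i))))|
              ≤ ∑ c, |W c s * (f x - ft (fun i => s (σ c i)) (fun i => x (s (σ c i))))| :=
                Finset.abs_sum_le_sum_abs _ _
            _ = D s := Finset.sum_congr rfl fun c _ => by
                rw [abs_mul, abs_of_nonneg (hW0 c s)]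
      -- bounds on |f - ft|
      have habs1 : ∀ (t : Fin k → Fin n) (a : Fin k → Bool), |f x - ft t a| ≤ 1 := by
        intro t a
        have h1 := hf x
        have h2 := hft t a
        rw [Set.mem_Icc] at h1 h2
        rw [abs_le]
        constructor <;> linarith [h1.1, h1.2, h2.1, h2.2]
      -- Claim: surjective bound
      have hsurj_bound : ∀ c : Fin r → Fin k, Function.Surjective c →
          ∑ s : Fin r → Fin n,
            W c s * |f x - ft (fun i => s (σ c i)) (fun i => x (s (σ c i)))| ≤ ε ^ 2 / 2 := by
        intro c hc
        have hmarg := marginalize (fun j => μ (c j)) (fun j => hμ1 (c j)) (σ c) (hσ_inj c hc)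
          (fun t => |f x - ft t (fun i => x (t i))|)
        have hQ0 : ∀ t : Fin k → Fin n, 0 ≤ ∏ i, μ i (t i) :=
          fun t => Finset.prod_nonneg fun i _ => hμ0 _ _
        have hQsum : ∑ t : Fin k → Fin n, ∏ i, μ i (t i) = 1 := by
          rw [sum_prod_fn (fun i m => μ i m)]
          exact Finset.prod_eq_one fun i _ => hμ1 i
        have hS1ge := hholo x
        have hS1le : (∑ t : Fin k → Fin n,
            (if |f x - ft t (fun j => x (t j))| ≤ ε ^ 2 / 4 then ∏ i, μ i (t i) else 0)) ≤ 1 := by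
          rw [← hQsum]
          refine Finset.sum_le_sum fun t _ => ?_
          split
          · exact le_refl _
          · exact hQ0 t
        calc ∑ s : Fin r → Fin n,
              W c s * |f x - ft (fun i => s (σ c i)) (fun i => x (s (σ c i)))|
            = ∑ t : Fin k → Fin n,
                (∏ i, μ (c (σ c i)) (t i)) * |f x - ft t (fun i => x (t i))| := hmarg
          _ = ∑ t : Fin k → Fin n, (∏ i, μ i (t i)) * |f x - ft t (fun i => x (t i))| := by
              refine Finset.sum_congr rfl fun t _ => ?_
              congr 1
              exact Finset.prod_congr rfl fun i _ => by rw [hσ_eq c hc i]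
          _ ≤ ∑ t : Fin k → Fin n,
                (ε ^ 2 / 4 * (if |f x - ft t (fun j => x (t j))| ≤ ε ^ 2 / 4
                    then ∏ i, μ i (t i) else 0)
                  + ((∏ i, μ i (t i))
                    - (if |f x - ft t (fun j => x (t j))| ≤ ε ^ 2 / 4
                        then ∏ i, μ i (t i) else 0))) := by
              refine Finset.sum_le_sum fun t _ => ?_
              by_cases hgood : |f x - ft t (fun j => x (t j))| ≤ ε ^ 2 / 4
              · rw [if_pos hgood]
                have := mul_le_mul_of_nonneg_left hgood (hQ0 t)
                nlinarith [this]
              · rw [if_neg hgood]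
                have := mul_le_mul_of_nonneg_left (habs1 t (fun j => x (t j))) (hQ0 t)
                nlinarith [this]
          _ ≤ ε ^ 2 / 2 := by
              rw [Finset.sum_add_distrib, ← Finset.mul_sum, Finset.sum_sub_distrib, hQsum]
              nlinarith [hS1ge, hS1le, sq_nonneg ε]
      -- nonsurjective bound
      have hnonsurj_bound : ∀ c : Fin r → Fin k,
          ∑ s : Fin r → Fin n,
            W c s * |f x - ft (fun i => s (σ c i)) (fun i => x (s (σ c i)))| ≤ 1 := by
        intro c
        calc ∑ s : Fin r → Fin n,
              W c s * |f x - ft (fun i => s (σ c i)) (fun i => x (s (σ c i)))|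
            ≤ ∑ s : Fin r → Fin n, W c s :=
              Finset.sum_le_sum fun s _ => mul_le_of_le_one_right (hW0 c s) (habs1 _ _)
          _ = 1 := hWsum c
      -- power bound
      have hpow : (k:ℝ) * ((k:ℝ) - 1) ^ r ≤ (k:ℝ) ^ r * (ε ^ 2 / 2) := by
        have h1 : (k:ℝ) - 1 ≤ k * Real.exp (-1 / (k:ℝ)) := by
          have h2 := Real.add_one_le_exp (-1 / (k:ℝ))
          have h2' := mul_le_mul_of_nonneg_left h2 (le_of_lt hk0)
          have h2'' : (k:ℝ) * (-1 / (k:ℝ) + 1) = (k:ℝ) - 1 := by field_simp; ring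
          linarith
        have h2 : ((k:ℝ) - 1) ^ r ≤ ((k:ℝ) * Real.exp (-1 / k)) ^ r :=
          pow_le_pow_left₀ (by linarith) h1 r
        have h3 : ((k:ℝ) * Real.exp (-1 / k)) ^ r = (k:ℝ) ^ r * Real.exp (-(r:ℝ) / k) := by
          rw [mul_pow, ← Real.exp_nat_mul]
          congr 1
          field_simp
        have h4 : (k:ℝ) * ((k:ℝ) ^ r * Real.exp (-(r:ℝ) / k)) ≤ (k:ℝ) ^ r * (ε ^ 2 / 2) := by
          have h5 : (k:ℝ) * ((k:ℝ) ^ r * Real.exp (-(r:ℝ) / k))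
              = (k:ℝ) ^ r * ((k:ℝ) * Real.exp (-(r:ℝ) / k)) := by ring
          rw [h5]
          exact mul_le_mul_of_nonneg_left hr (by positivity)
        calc (k:ℝ) * ((k:ℝ) - 1) ^ r ≤ (k:ℝ) * ((k:ℝ) * Real.exp (-1 / k)) ^ r := by
              exact mul_le_mul_of_nonneg_left h2 (le_of_lt hk0)
          _ = (k:ℝ) * ((k:ℝ) ^ r * Real.exp (-(r:ℝ) / k)) := by rw [h3]
          _ ≤ (k:ℝ) ^ r * (ε ^ 2 / 2) := h4
      -- Claim 2
      have hclaim2 : ∑ s : Fin r → Fin n, D s ≤ (k:ℝ) ^ r * ε ^ 2 := by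
        have hcard : (Finset.univ : Finset (Fin r → Fin k)).card = k ^ r := by
          simp [Finset.card_univ]
        calc ∑ s : Fin r → Fin n, D s
            = ∑ c : Fin r → Fin k, ∑ s : Fin r → Fin n,
                W c s * |f x - ft (fun i => s (σ c i)) (fun i => x (s (σ c i)))| :=
              Finset.sum_comm
          _ ≤ ∑ c : Fin r → Fin k,
                (ε ^ 2 / 2 + (if Function.Surjective c then (0:ℝ) else 1)) := by
              refine Finset.sum_le_sum fun c _ => ?_
              by_cases hc : Function.Surjective c
              · rw [if_pos hc]
                have := hsurj_bound c hc
                linarith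
              · rw [if_neg hc]
                have := hnonsurj_bound c
                have h6 : (0:ℝ) ≤ ε ^ 2 / 2 := by positivity
                linarith
          _ = (k:ℝ) ^ r * (ε ^ 2 / 2)
              + ∑ c : Fin r → Fin k, (if Function.Surjective c then (0:ℝ) else 1) := by
              rw [Finset.sum_add_distrib, Finset.sum_const, hcard, nsmul_eq_mul]
              push_cast
              ring
          _ ≤ (k:ℝ) ^ r * (ε ^ 2 / 2) + (k:ℝ) ^ r * (ε ^ 2 / 2) := by
              have := (count_nonsurj k r).trans hpow
              linarith
          _ = (k:ℝ) ^ r * ε ^ 2 := by ring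
      -- measure identities
      have hPT : ∀ s : Fin r → Fin n,
          (∏ j, (1 / (k:ℝ)) * ∑ i, μ i (s j)) = (1 / (k:ℝ)) ^ r * T s := by
        intro s
        rw [Finset.prod_mul_distrib, Finset.prod_const, Finset.card_univ, Fintype.card_fin]
        congr 1
        rw [hTdef, hWdef]
        exact (sum_prod_fn (fun j i => μ i (s j))).symm
      have hPsum : ∑ s : Fin r → Fin n, (∏ j, (1 / (k:ℝ)) * ∑ i, μ i (s j)) = 1 := by
        rw [sum_prod_fn (fun j m => (1 / (k:ℝ)) * ∑ i, μ i m)]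
        refine Finset.prod_eq_one fun j _ => ?_
        rw [← Finset.mul_sum, Finset.sum_comm]
        have h7 : ∑ i : Fin k, ∑ m : Fin n, μ i m = (k:ℝ) := by
          rw [Finset.sum_congr rfl fun i _ => hμ1 i]
          simp [Finset.card_univ]
        rw [h7]
        field_simp
      have hP0 : ∀ s : Fin r → Fin n, 0 ≤ ∏ j, (1 / (k:ℝ)) * ∑ i, μ i (s j) := by
        intro s
        refine Finset.prod_nonneg fun j _ => ?_
        have := Finset.sum_nonneg (fun i (_ : i ∈ Finset.univ) => hμ0 i (s j))
        positivity
      -- Markov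
      set B : ℝ := ∑ s : Fin r → Fin n,
        (if ¬(|f x - g s (fun j => x (s j))| ≤ ε)
          then ∏ j, (1 / (k:ℝ)) * ∑ i, μ i (s j) else 0) with hBdef
      have hmark : B ≤ ε := by
        have key : ε * B ≤ (1 / (k:ℝ)) ^ r * ∑ s, D s := by
          rw [hBdef, Finset.mul_sum, Finset.mul_sum]
          refine Finset.sum_le_sum fun s _ => ?_
          by_cases hb : |f x - g s (fun j => x (s j))| ≤ ε
          · rw [if_neg (not_not_intro hb), mul_zero]
            exact mul_nonneg (by positivity) (hD0 s)
          · rw [if_pos hb, hPT s]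
            have h1 : ε * T s ≤ |f x - g s (fun j => x (s j))| * T s :=
              mul_le_mul_of_nonneg_right (le_of_lt (not_le.mp hb)) (hT0 s)
            calc ε * ((1 / (k:ℝ)) ^ r * T s) = (1 / (k:ℝ)) ^ r * (ε * T s) := by ring
              _ ≤ (1 / (k:ℝ)) ^ r * D s :=
                mul_le_mul_of_nonneg_left (h1.trans (hclaim1 s)) (by positivity)
        have h3 : (1 / (k:ℝ)) ^ r * ∑ s, D s ≤ ε ^ 2 := by
          have h4 : (1 / (k:ℝ)) ^ r * ((k:ℝ) ^ r * ε ^ 2) = ε ^ 2 := by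
            rw [one_div, inv_pow, ← mul_assoc, inv_mul_cancel₀ (pow_ne_zero _ (ne_of_gt hk0)),
              one_mul]
          calc (1 / (k:ℝ)) ^ r * ∑ s, D s ≤ (1 / (k:ℝ)) ^ r * ((k:ℝ) ^ r * ε ^ 2) :=
                mul_le_mul_of_nonneg_left hclaim2 (by positivity)
            _ = ε ^ 2 := h4
        have h5 : ε * B ≤ ε * ε := by
          calc ε * B ≤ ε ^ 2 := key.trans h3
            _ = ε * ε := sq ε
        exact le_of_mul_le_mul_left h5 hε0
      have hsplit : ∀ s : Fin r → Fin n,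
          (if |f x - g s (fun j => x (s j))| ≤ ε
            then ∏ j, (1 / (k:ℝ)) * ∑ i, μ i (s j) else 0)
          = (∏ j, (1 / (k:ℝ)) * ∑ i, μ i (s j))
            - (if ¬(|f x - g s (fun j => x (s j))| ≤ ε)
                then ∏ j, (1 / (k:ℝ)) * ∑ i, μ i (s j) else 0) := by
        intro s
        by_cases hb : |f x - g s (fun j => x (s j))| ≤ ε <;> simp [hb]
      calc (1:ℝ) - ε ≤ 1 - B := by linarith
        _ = ∑ s : Fin r → Fin n,
            (if |f x - g s (fun j => x (s j))| ≤ ε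
              then ∏ j, (1 / (k:ℝ)) * ∑ i, μ i (s j) else 0) := by
            rw [Finset.sum_congr rfl fun s _ => hsplit s, Finset.sum_sub_distrib, hPsum, hBdef]
end
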